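/- arXiv:2603.15146 — 11 statements merged into one kernel-verified Lean document; each statement's English description precedes it below -/
import Mathlib

section
/- Let m ≥ 3 be an odd integer, let i be a positive integer with gcd(i,m) = 1, set q = 2^i, and let a be a nonzero element of the finite field 𝔽_{2^m}. Consider the six polynomials in 𝔽_{2^m}[T]: P_a(T) = T^{q²+q+1} + (aT^q + 1)^{q+1}, P_a'(T) = T^{q²+q+1} + aT^{q²+q} + 1, Q_a(T) = T^{q²+q+1} + aT + 1, Q_{a^q}(T) = T^{q²+q+1} + a^q T + 1, R_a(T) = T^{q²+q+1} + (aT + 1)^{q+1}, and S_a(T) = T^{q²+q+1} + a^q T^{q+1} + 1. Then each of these polynomials evaluates to 1 at T = 0, and any one of them has a root in 𝔽_{2^m} \ {0} if and only if all of them do. -/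
set_option linter.unusedSectionVars false
set_option linter.unusedVariables false
set_option maxHeartbeats 1000000

section AuxStmt0

variable {F : Type*} [Field F] [Fintype F]


lemma aux_copr {u v : ℕ} (hu : 0 < u) (hv : 1 < v) (h : Nat.gcd u v = 1) :
    Nat.Coprime (2 ^ u - 1) (2 ^ v - 1) := by
  obtain ⟨x, -, hx⟩ := Nat.exists_mul_mod_eq_one_of_coprime h hv
  set y := u * x / v with hy
  have hux : u * x = v * y + 1 := by
    rw [hy]; conv_lhs => rw [← Nat.div_add_mod (u * x) v]
    rw [hx]
  set d := Nat.gcd (2 ^ u - 1) (2 ^ v - 1) with hd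
  have hdu : d ∣ 2 ^ u - 1 := Nat.gcd_dvd_left _ _
  have hdv : d ∣ 2 ^ v - 1 := Nat.gcd_dvd_right _ _
  have h1 : d ∣ 2 ^ (u * x) - 1 := by
    refine hdu.trans ?_
    simpa [pow_mul] using Nat.sub_dvd_pow_sub_pow (2 ^ u) 1 x
  have h2 : d ∣ 2 ^ (v * y) - 1 := by
    refine hdv.trans ?_
    simpa [pow_mul] using Nat.sub_dvd_pow_sub_pow (2 ^ v) 1 y
  have h3 : d ∣ 2 ^ (v * y) := by
    have := Nat.dvd_sub h1 h2
    have he : 2 ^ (u * x) - 1 - (2 ^ (v * y) - 1) = 2 ^ (v * y) := by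
      have h4 : 2 ^ (u * x) = 2 * 2 ^ (v * y) := by rw [hux, pow_succ]; ring
      have h5 : 1 ≤ 2 ^ (v * y) := Nat.one_le_two_pow
      omega
    rwa [he] at this
  have hodd : ¬ (2 ∣ d) := by
    intro h2d
    have h7 : 2 ∣ 2 ^ u - 1 := h2d.trans hdu
    have h6 : 2 ∣ 2 ^ u := dvd_pow_self 2 hu.ne'
    have h5 : 1 ≤ 2 ^ u := Nat.one_le_two_pow
    omega
  have hcop : Nat.Coprime d (2 ^ (v * y)) :=
    Nat.Coprime.pow_right _ ((Nat.coprime_two_right).2 (Nat.odd_iff.2 (by omega)))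
  exact hcop.eq_one_of_dvd h3




lemma aux_char2 {m : ℕ} (hm : 0 < m) (hF : Fintype.card F = 2 ^ m) : CharP F 2 := by
  have hp : (ringChar F).Prime := CharP.char_is_prime F (ringChar F)
  obtain ⟨n, hn⟩ := FiniteField.card F (ringChar F)
  have : ringChar F ∣ 2 := by
    have hdvd : ringChar F ∣ 2 ^ m := by
      rw [← hF, hn.2]
      exact dvd_pow_self _ (by positivity)
    exact hp.dvd_of_dvd_pow hdvd
  have : ringChar F = 2 := ((Nat.prime_dvd_prime_iff_eq hp Nat.prime_two).1 this)
  rw [← this]; exact ringChar.charP F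

lemma aux_pow_inj {n : ℕ} (hn0 : 0 < n) (hn : Nat.Coprime n (Fintype.card F - 1)) :
    Function.Injective (fun x : F => x ^ n) := by
  intro x y hxy
  simp only at hxy
  rcases eq_or_ne x 0 with rfl | hx
  · exact ((pow_eq_zero_iff hn0.ne').1 (by rw [← hxy, zero_pow hn0.ne'])).symm
  rcases eq_or_ne y 0 with rfl | hy
  · exact absurd ((pow_eq_zero_iff hn0.ne').1 (by rw [hxy, zero_pow hn0.ne'])) hx
  have hu : (x * y⁻¹) ^ n = 1 := by
    rw [mul_pow, inv_pow, hxy, mul_inv_cancel₀ (pow_ne_zero _ hy)]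
  have hu2 : (x * y⁻¹) ^ (Fintype.card F - 1) = 1 :=
    FiniteField.pow_card_sub_one_eq_one _ (by simp [hx, hy])
  have h1 : orderOf (x * y⁻¹) ∣ Nat.gcd n (Fintype.card F - 1) :=
    Nat.dvd_gcd (orderOf_dvd_of_pow_eq_one hu) (orderOf_dvd_of_pow_eq_one hu2)
  rw [hn] at h1
  have : x * y⁻¹ = 1 := orderOf_eq_one_iff.1 (Nat.eq_one_of_dvd_one h1 ▸ rfl)
  field_simp at this; exact this

lemma aux_pow_bij {n : ℕ} (hn0 : 0 < n) (hn : Nat.Coprime n (Fintype.card F - 1)) :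
    Function.Bijective (fun x : F => x ^ n) :=
  ⟨aux_pow_inj hn0 hn, Finite.surjective_of_injective (aux_pow_inj hn0 hn)⟩

lemma aux_frob_inj [CharP F 2] (k : ℕ) {x y : F} (h : x ^ 2 ^ k = y ^ 2 ^ k) : x = y := by
  have h2 : (x + y) ^ 2 ^ k = 0 := by
    rw [add_pow_char_pow, h, ← add_pow_char_pow]
    simp [CharTwo.add_self_eq_zero]
  have h3 := pow_eq_zero_iff (n := 2 ^ k) (by positivity) |>.1 h2
  have h4 : x = -y := eq_neg_of_add_eq_zero_left h3
  rwa [CharTwo.neg_eq] at h4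



open Finset


def auxTr (m : ℕ) (x : F) : F := ∑ j ∈ Finset.range m, x ^ 2 ^ j

lemma auxTr_add [CharP F 2] (m : ℕ) (x y : F) :
    auxTr m (x + y) = auxTr m x + auxTr m y := by
  unfold auxTr
  rw [← Finset.sum_add_distrib]
  exact Finset.sum_congr rfl fun j _ => add_pow_char_pow x y 2 j

lemma auxTr_zero (m : ℕ) : auxTr m (0 : F) = 0 := by
  unfold auxTr
  refine Finset.sum_eq_zero fun j _ => zero_pow (by positivity)

lemma aux_pow_card {m : ℕ} (hF : Fintype.card F = 2 ^ m) (x : F) : x ^ 2 ^ m = x := by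
  rw [← hF]; exact FiniteField.pow_card x

lemma auxTr_sq {m : ℕ} (hF : Fintype.card F = 2 ^ m) (x : F) :
    auxTr m (x ^ 2) = auxTr m x := by
  have h := Finset.sum_range_sub (fun j => x ^ 2 ^ j) m
  have h2 : ∀ j, x ^ 2 ^ (j + 1) = (x ^ 2) ^ 2 ^ j := fun j => by
    rw [← pow_mul, pow_succ, mul_comm (2 ^ j) 2, pow_mul]
  have h3 : auxTr m (x ^ 2) - auxTr m x = x ^ 2 ^ m - x ^ 2 ^ 0 := by
    rw [← h, Finset.sum_sub_distrib]
    unfold auxTr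
    congr 1
    exact Finset.sum_congr rfl fun j _ => (h2 j).symm
  rw [aux_pow_card hF, pow_zero, pow_one, sub_self] at h3
  exact sub_eq_zero.1 h3

lemma auxTr_pow2 {m : ℕ} (hF : Fintype.card F = 2 ^ m) (k : ℕ) (x : F) :
    auxTr m (x ^ 2 ^ k) = auxTr m x := by
  induction k with
  | zero => simp
  | succ k ih =>
    have : x ^ 2 ^ (k + 1) = (x ^ 2 ^ k) ^ 2 := by
      rw [← pow_mul, pow_succ]
    rw [this, auxTr_sq hF, ih]

lemma auxTr_exists_ne_zero {m : ℕ} (hm : 0 < m) (hF : Fintype.card F = 2 ^ m) :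
    ∃ u : F, auxTr m u ≠ 0 := by
  by_contra hc
  push_neg at hc
  set P : Polynomial F := ∑ j ∈ Finset.range m, Polynomial.X ^ 2 ^ j with hP
  have heval : ∀ x : F, P.eval x = 0 := by
    intro x
    rw [hP]
    simp only [Polynomial.eval_finset_sum, Polynomial.eval_pow, Polynomial.eval_X]
    exact hc x
  have hdeg : P.natDegree < Fintype.card F := by
    have : P.natDegree ≤ 2 ^ (m - 1) := by
      refine Polynomial.natDegree_sum_le_of_forall_le _ _ fun j hj => ?_
      rw [Polynomial.natDegree_X_pow]
      exact Nat.pow_le_pow_right (by norm_num) (by simp at hj; omega)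
    rw [hF]
    exact lt_of_le_of_lt this (Nat.pow_lt_pow_right (by norm_num) (by omega))
  have hP0 : P = 0 :=
    Polynomial.eq_zero_of_natDegree_lt_card_of_eval_eq_zero P Function.injective_id
      (fun x => heval x) hdeg
  have hcoeff : P.coeff 1 = 1 := by
    rw [hP, Polynomial.finset_sum_coeff]
    rw [Finset.sum_eq_single 0]
    · simp
    · intro j hj hj0
      rw [Polynomial.coeff_X_pow]
      have : 2 ^ j ≠ 1 := by
        have : 1 < 2 ^ j := Nat.one_lt_two_pow hj0
        omega
      simp [Ne.symm this]
    · intro h; exact absurd (Finset.mem_range.2 hm) h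
  rw [hP0] at hcoeff
  simp at hcoeff




lemma aux_pow_card_mul {m : ℕ} (hF : Fintype.card F = 2 ^ m) (k : ℕ) (x : F) :
    x ^ 2 ^ (m * k) = x := by
  induction k with
  | zero => simp
  | succ k ih =>
    rw [Nat.mul_succ, pow_add, pow_mul, ih, aux_pow_card hF]

lemma aux_pp (c k l : ℕ) (x : F) : (x ^ c ^ k) ^ c ^ l = x ^ c ^ (k + l) := by
  rw [← pow_mul, ← pow_add]

lemma aux_addpow [CharP F 2] (i k : ℕ) (x y : F) :
    (x + y) ^ ((2:ℕ) ^ i) ^ k = x ^ ((2:ℕ) ^ i) ^ k + y ^ ((2:ℕ) ^ i) ^ k := by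
  rw [← pow_mul]
  exact add_pow_char_pow x y 2 (i * k)

lemma auxTr_powq {m i : ℕ} (hF : Fintype.card F = 2 ^ m) (k : ℕ) (x : F) :
    auxTr m (x ^ ((2:ℕ) ^ i) ^ k) = auxTr m x := by
  rw [← pow_mul]
  exact auxTr_pow2 hF (i * k) x

lemma aux_powqm {m i : ℕ} (hF : Fintype.card F = 2 ^ m) (x : F) :
    x ^ ((2:ℕ) ^ i) ^ m = x := by
  rw [← pow_mul, mul_comm]
  exact aux_pow_card_mul hF i x

lemma aux_dual {m i : ℕ} [CharP F 2] (hm : 3 ≤ m) (hF : Fintype.card F = 2 ^ m)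
    {q : ℕ} (hq : q = 2 ^ i) (a : F) :
    (∃ w : F, w ≠ 0 ∧ w ^ q ^ 3 + a * w ^ q + w = 0) ↔
    (∃ v : F, v ≠ 0 ∧ v ^ q ^ 3 + a ^ q ^ 2 * v ^ q ^ 2 + v = 0) := by
  subst hq
  set c : ℕ := 2 ^ i with hc
  set L : F → F := fun w => w ^ c ^ 3 + a * w ^ c + w with hL
  set A : F → F := fun v => v ^ c ^ (m - 3) + (a * v) ^ c ^ (m - 1) + v with hA
  set M : F → F := fun v => v ^ c ^ 3 + a ^ c ^ 2 * v ^ c ^ 2 + v with hM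
  have hm3 : m - 3 + 3 = m := by omega
  have hm1 : m - 1 + 3 = m + 2 := by omega
  have f1 : ∀ v : F, (A v) ^ c ^ 3 = M v := by
    intro v
    rw [hA, hM]
    simp only [hc, aux_addpow]
    rw [aux_pp, aux_pp, hm3, hm1, aux_powqm hF]
    have : (a * v) ^ ((2:ℕ) ^ i) ^ (m + 2) = a ^ ((2:ℕ)^i) ^ 2 * v ^ ((2:ℕ)^i) ^ 2 := by
      rw [← aux_pp ((2:ℕ)^i) m 2, mul_pow, aux_powqm hF, mul_pow, aux_powqm hF]
    rw [this]; ring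
  have fM : ∀ v : F, A v = 0 ↔ M v = 0 := by
    intro v
    constructor
    · intro h; rw [← f1, h, hc, ← pow_mul]; exact zero_pow (by positivity)
    · intro h
      have : (A v) ^ c ^ 3 = (0 : F) ^ c ^ 3 := by
        rw [f1, h]; rw [hc, ← pow_mul]; exact (zero_pow (by positivity)).symm
      rw [hc, ← pow_mul] at this
      exact aux_frob_inj (i * 3) this
  have f2 : ∀ v w : F, auxTr m (v * L w) = auxTr m (A v * w) := by
    intro v w
    have e1 : v * L w = v * w ^ c ^ 3 + (a * v) * w ^ c + v * w := by rw [hL]; ring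
    have e2 : A v * w = v ^ c ^ (m - 3) * w + (a * v) ^ c ^ (m - 1) * w + v * w := by
      rw [hA]; ring
    rw [e1, e2, auxTr_add, auxTr_add, auxTr_add, auxTr_add]
    congr 1
    congr 1
    · have : v * w ^ c ^ 3 = (v ^ c ^ (m - 3) * w) ^ c ^ 3 := by
        rw [mul_pow, aux_pp, hm3, hc, aux_powqm hF]
      rw [this, hc, auxTr_powq hF]
    · have : (a * v) * w ^ c = ((a * v) ^ c ^ (m - 1) * w) ^ c ^ 1 := by
        rw [mul_pow, aux_pp, (by omega : m - 1 + 1 = m), hc, aux_powqm hF, pow_one]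
      rw [this, hc, auxTr_powq hF]
  have aux_addpow1 : ∀ x y : F, (x + y) ^ ((2:ℕ) ^ i) = x ^ ((2:ℕ)^i) + y ^ ((2:ℕ)^i) := by
    intro x y; simpa using aux_addpow i 1 x y
  have hLadd : ∀ x y : F, L (x + y) = L x + L y := by
    intro x y
    rw [hL]
    simp only [hc, aux_addpow, aux_addpow1, mul_add]
    ring
  have hMadd : ∀ x y : F, M (x + y) = M x + M y := by
    intro x y
    rw [hM]
    simp only [hc, mul_add, aux_addpow]
    ring
  have hAadd : ∀ x y : F, A (x + y) = A x + A y := by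
    intro x y
    rw [hA]
    simp only [hc, mul_add, aux_addpow]
    ring
  obtain ⟨u, hu⟩ := auxTr_exists_ne_zero (by omega) hF
  constructor
  · rintro ⟨w, hw0, hw⟩
    have hLw : L w = 0 := by rw [hL]; exact hw
    by_contra hno
    push_neg at hno
    have hMker : ∀ v : F, M v = 0 → v = 0 := by
      intro v hv
      by_contra hv0
      exact hno v hv0 (by rw [← hv, hM])
    have hAinj : Function.Injective A := by
      intro x y hxy
      have h0 : A (x + y) = 0 := by
        rw [hAadd x y, hxy, CharTwo.add_self_eq_zero]
      have := hMker _ ((fM _).1 h0)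
      have h4 : x = -y := eq_neg_of_add_eq_zero_left this
      rwa [CharTwo.neg_eq] at h4
    obtain ⟨v, hv⟩ := Finite.surjective_of_injective hAinj (w⁻¹ * u)
    have h5 : auxTr m (v * L w) = auxTr m u := by
      rw [f2, hv]
      congr 1
      field_simp
    rw [hLw, mul_zero, auxTr_zero] at h5
    exact hu h5.symm
  · rintro ⟨v, hv0, hv⟩
    have hMv : M v = 0 := by rw [hM]; exact hv
    have hAv : A v = 0 := (fM v).2 hMv
    by_contra hno
    push_neg at hno
    have hLker : ∀ w : F, L w = 0 → w = 0 := by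
      intro w hw
      by_contra hw0
      exact hno w hw0 (by rw [← hw, hL])
    have hLinj : Function.Injective L := by
      intro x y hxy
      have h0 : L (x + y) = 0 := by
        rw [hLadd x y, hxy, CharTwo.add_self_eq_zero]
      have := hLker _ h0
      have h4 : x = -y := eq_neg_of_add_eq_zero_left this
      rwa [CharTwo.neg_eq] at h4
    obtain ⟨w, hw⟩ := Finite.surjective_of_injective hLinj (v⁻¹ * u)
    have h5 : auxTr m (v * L w) = auxTr m u := by
      rw [hw]
      congr 1
      field_simp
    rw [f2, hAv, zero_mul, auxTr_zero] at h5
    exact hu h5.symm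




lemma aux_pow_surj {n : ℕ} (hn0 : 0 < n) (hn : Nat.Coprime n (Fintype.card F - 1)) :
    Function.Surjective (fun x : F => x ^ n) :=
  Finite.surjective_of_injective (aux_pow_inj hn0 hn)

/-- inverse substitution, shape 1 → shape 2 -/
lemma aux_inv {e : ℕ} {a t : F} (ht : t ≠ 0)
    (he : t ^ (e + 1) + a * t ^ e + 1 = 0) :
    (t⁻¹) ^ (e + 1) + a * t⁻¹ + 1 = 0 := by
  have h1 : ((t⁻¹) ^ (e + 1) + a * t⁻¹ + 1) * t ^ (e + 1) = 0 := by
    have hti : t⁻¹ * t = 1 := inv_mul_cancel₀ ht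
    calc ((t⁻¹) ^ (e + 1) + a * t⁻¹ + 1) * t ^ (e + 1)
        = (t⁻¹ * t) ^ (e + 1) + (a * t ^ e) * (t⁻¹ * t) + t ^ (e + 1) := by ring
      _ = 1 + a * t ^ e + t ^ (e + 1) := by rw [hti]; ring
      _ = 0 := by linear_combination he
  rcases mul_eq_zero.1 h1 with h | h
  · exact h
  · exact absurd h (pow_ne_zero _ ht)

/-- inverse substitution, shape 2 → shape 1 -/
lemma aux_inv' {e : ℕ} {a t : F} (ht : t ≠ 0)
    (he : t ^ (e + 1) + a * t + 1 = 0) :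
    (t⁻¹) ^ (e + 1) + a * (t⁻¹) ^ e + 1 = 0 := by
  have h1 : ((t⁻¹) ^ (e + 1) + a * (t⁻¹) ^ e + 1) * t ^ (e + 1) = 0 := by
    have hti : t⁻¹ * t = 1 := inv_mul_cancel₀ ht
    calc ((t⁻¹) ^ (e + 1) + a * (t⁻¹) ^ e + 1) * t ^ (e + 1)
        = (t⁻¹ * t) ^ (e + 1) + (a * t) * (t⁻¹ * t) ^ e + t ^ (e + 1) := by ring
      _ = 1 + a * t + t ^ (e + 1) := by rw [hti]; ring
      _ = 0 := by linear_combination he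
  rcases mul_eq_zero.1 h1 with h | h
  · exact h
  · exact absurd h (pow_ne_zero _ ht)

/-- Frobenius twist -/
lemma aux_frob [CharP F 2] {i q : ℕ} (hq : q = 2 ^ i) (N k : ℕ) (b : F) :
    (∃ t : F, t ≠ 0 ∧ t ^ N + b * t ^ k + 1 = 0) ↔
    (∃ t : F, t ≠ 0 ∧ t ^ N + b ^ q * t ^ k + 1 = 0) := by
  have hexp : ∀ (x : F) (n : ℕ), (x ^ n) ^ q = (x ^ q) ^ n := by
    intro x n; rw [← pow_mul, ← pow_mul, mul_comm]
  have hfr : ∀ x y z : F, (x + y + z) ^ q = x ^ q + y ^ q + z ^ q := by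
    intro x y z
    rw [hq, add_pow_char_pow, add_pow_char_pow]
  constructor
  · rintro ⟨t, ht, he⟩
    refine ⟨t ^ q, pow_ne_zero _ ht, ?_⟩
    have : (t ^ N + b * t ^ k + 1) ^ q = 0 := by rw [he]; exact zero_pow (by simp [hq])
    rw [hfr, mul_pow, one_pow, hexp, hexp] at this
    exact this
  · rintro ⟨s, hs, he⟩
    obtain ⟨t, ht⟩ : ∃ t : F, t ^ q = s := by
      have : Function.Surjective (fun x : F => x ^ 2 ^ i) :=
        Finite.surjective_of_injective (fun x y h => aux_frob_inj i h)
      obtain ⟨t, ht⟩ := this s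
      exact ⟨t, by rw [hq]; exact ht⟩
    have ht0 : t ≠ 0 := by
      rintro rfl
      rw [zero_pow (by simp [hq])] at ht
      exact hs ht.symm
    refine ⟨t, ht0, ?_⟩
    have h2 : (t ^ N + b * t ^ k + 1) ^ q = 0 := by
      rw [hfr, mul_pow, one_pow, hexp, hexp, ht, he]
    rw [hq] at h2
    exact pow_eq_zero_iff (by positivity) |>.1 h2

/-- substitution u = w^(q-1) -/
lemma aux_wsub {q : ℕ} (hq2 : 2 ≤ q)
    (hco : Nat.Coprime (q - 1) (Fintype.card F - 1))
    {k l : ℕ} (hkl : (q - 1) * k + 1 = l)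
    (hNq : (q - 1) * (q ^ 2 + q + 1) + 1 = q ^ 3) (b : F) :
    (∃ u : F, u ≠ 0 ∧ u ^ (q ^ 2 + q + 1) + b * u ^ k + 1 = 0) ↔
    (∃ w : F, w ≠ 0 ∧ w ^ q ^ 3 + b * w ^ l + w = 0) := by
  have hq1 : 0 < q - 1 := by omega
  have key : ∀ w : F, (w ^ (q - 1)) ^ (q ^ 2 + q + 1) * w = w ^ q ^ 3 ∧
      (w ^ (q - 1)) ^ k * w = w ^ l := by
    intro w
    constructor
    · rw [← pow_mul, ← pow_succ, hNq]
    · rw [← pow_mul, ← pow_succ, hkl]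
  constructor
  · rintro ⟨u, hu, he⟩
    obtain ⟨w, hw⟩ := aux_pow_surj hq1 hco u
    simp only at hw
    have hw0 : w ≠ 0 := by rintro rfl; rw [zero_pow hq1.ne'] at hw; exact hu hw.symm
    refine ⟨w, hw0, ?_⟩
    have h2 : (u ^ (q ^ 2 + q + 1) + b * u ^ k + 1) * w = 0 := by rw [he, zero_mul]
    rw [← hw, add_mul, add_mul, one_mul, (key w).1, mul_assoc, (key w).2] at h2
    exact h2
  · rintro ⟨w, hw0, he⟩
    refine ⟨w ^ (q - 1), pow_ne_zero _ hw0, ?_⟩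
    have h2 : ((w ^ (q - 1)) ^ (q ^ 2 + q + 1) + b * (w ^ (q - 1)) ^ k + 1) * w = 0 := by
      rw [add_mul, add_mul, one_mul, (key w).1, mul_assoc, (key w).2]
      exact he
    rcases mul_eq_zero.1 h2 with h | h
    · exact h
    · exact absurd h hw0




lemma aux_qp1 [CharP F 2] {q : ℕ} (hco : Nat.Coprime (q + 1) (Fintype.card F - 1))
    (k e : ℕ) (hke : (q + 1) * k = e) (b : F) :
    (∃ t : F, t ≠ 0 ∧ t ^ (q ^ 2 + q + 1) + (b * t ^ k + 1) ^ (q + 1) = 0) ↔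
    (∃ u : F, u ≠ 0 ∧ u ^ (q ^ 2 + q + 1) + b * u ^ e + 1 = 0) := by
  have htwo : (2 : F) = 0 := CharTwo.two_eq_zero
  have hq1 : 0 < q + 1 := by omega
  constructor
  · rintro ⟨t, ht, he⟩
    obtain ⟨u, hu⟩ := aux_pow_surj hq1 hco t
    simp only at hu
    have hu0 : u ≠ 0 := by rintro rfl; rw [zero_pow hq1.ne'] at hu; exact ht hu.symm
    have e2 : u ^ e = t ^ k := by rw [← hu, ← pow_mul, hke]
    have e3 : (u ^ (q ^ 2 + q + 1)) ^ (q + 1) = t ^ (q ^ 2 + q + 1) := by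
      rw [← hu, ← pow_mul, ← pow_mul, mul_comm]
    have key : (u ^ (q ^ 2 + q + 1)) ^ (q + 1) = (b * u ^ e + 1) ^ (q + 1) := by
      rw [e3, e2]
      linear_combination he - ((b * t ^ k + 1) ^ (q + 1)) * htwo
    have ukey : u ^ (q ^ 2 + q + 1) = b * u ^ e + 1 := aux_pow_inj hq1 hco key
    exact ⟨u, hu0, by linear_combination ukey + (b * u ^ e + 1) * htwo⟩
  · rintro ⟨u, hu, he⟩
    have h1 : u ^ (q ^ 2 + q + 1) = b * u ^ e + 1 := by
      linear_combination he - (b * u ^ e + 1) * htwo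
    refine ⟨u ^ (q + 1), pow_ne_zero _ hu, ?_⟩
    have e2 : (u ^ (q + 1)) ^ k = u ^ e := by rw [← pow_mul, hke]
    have e3 : (u ^ (q + 1)) ^ (q ^ 2 + q + 1) = (u ^ (q ^ 2 + q + 1)) ^ (q + 1) := by
      rw [← pow_mul, ← pow_mul, mul_comm]
    rw [e2, e3, ← h1]
    exact CharTwo.add_self_eq_zero _

end AuxStmt0

theorem stmt_0 (m i : ℕ) (hm : 3 ≤ m) (hmodd : Odd m) (hi : 0 < i)
    (hgcd : Nat.gcd i m = 1) (q : ℕ) (hq : q = 2 ^ i)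
    (F : Type*) [Field F] [Fintype F] (hF : Fintype.card F = 2 ^ m)
    (a : F) (ha : a ≠ 0) :
    ((0 : F) ^ (q ^ 2 + q + 1) + (a * (0 : F) ^ q + 1) ^ (q + 1) = 1 ∧
     (0 : F) ^ (q ^ 2 + q + 1) + a * (0 : F) ^ (q ^ 2 + q) + 1 = 1 ∧
     (0 : F) ^ (q ^ 2 + q + 1) + a * (0 : F) + 1 = 1 ∧
     (0 : F) ^ (q ^ 2 + q + 1) + a ^ q * (0 : F) + 1 = 1 ∧
     (0 : F) ^ (q ^ 2 + q + 1) + (a * (0 : F) + 1) ^ (q + 1) = 1 ∧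
     (0 : F) ^ (q ^ 2 + q + 1) + a ^ q * (0 : F) ^ (q + 1) + 1 = 1) ∧
    [(∃ t : F, t ≠ 0 ∧ t ^ (q ^ 2 + q + 1) + (a * t ^ q + 1) ^ (q + 1) = 0),
     (∃ t : F, t ≠ 0 ∧ t ^ (q ^ 2 + q + 1) + a * t ^ (q ^ 2 + q) + 1 = 0),
     (∃ t : F, t ≠ 0 ∧ t ^ (q ^ 2 + q + 1) + a * t + 1 = 0),
     (∃ t : F, t ≠ 0 ∧ t ^ (q ^ 2 + q + 1) + a ^ q * t + 1 = 0),
     (∃ t : F, t ≠ 0 ∧ t ^ (q ^ 2 + q + 1) + (a * t + 1) ^ (q + 1) = 0),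
     (∃ t : F, t ≠ 0 ∧ t ^ (q ^ 2 + q + 1) + a ^ q * t ^ (q + 1) + 1 = 0)].TFAE := by
  haveI hch : CharP F 2 := aux_char2 (by omega) hF
  have hq2 : 2 ≤ q := by
    have h1 : 2 ^ 1 ≤ 2 ^ i := Nat.pow_le_pow_right (by norm_num) hi
    simpa [hq] using h1
  have hgcd2 : Nat.gcd (2 * i) m = 1 := Nat.Coprime.mul ((Nat.coprime_two_left).2 hmodd) hgcd
  have co1 : Nat.Coprime (q - 1) (Fintype.card F - 1) := by
    rw [hF, hq]
    exact aux_copr hi (by omega) hgcd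
  have co2 : Nat.Coprime (q + 1) (Fintype.card F - 1) := by
    rw [hF]
    have hfact : 2 ^ (2 * i) - 1 = (2 ^ i - 1) * (2 ^ i + 1) := by
      obtain ⟨A, hA⟩ : ∃ A, 2 ^ i = A + 1 := ⟨2 ^ i - 1, by have := Nat.one_le_two_pow (n := i); omega⟩
      rw [two_mul, pow_add, hA]
      have : (A + 1) * (A + 1) = A * (A + 2) + 1 := by ring
      rw [this]
      have h2 : (A + 1 - 1) * (A + 1 + 1) = A * (A + 2) := by simp
      omega
    have hd : (q + 1) ∣ 2 ^ (2 * i) - 1 := by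
      rw [hfact, hq]
      exact Dvd.intro_left _ rfl
    exact Nat.Coprime.coprime_dvd_left hd (aux_copr (by omega) (by omega) hgcd2)
  obtain ⟨r, hr⟩ : ∃ r, q = r + 2 := ⟨q - 2, by omega⟩
  have hNq : (q - 1) * (q ^ 2 + q + 1) + 1 = q ^ 3 := by subst hr; simp; ring
  have hk1 : (q - 1) * (q + 1) + 1 = q ^ 2 := by subst hr; simp; ring
  have hkk : (q - 1) * 1 + 1 = q := by omega
  constructor
  · have h1 : q ^ 2 + q + 1 ≠ 0 := by positivity
    have h2 : q ≠ 0 := by omega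
    have h3 : q ^ 2 + q ≠ 0 := by positivity
    refine ⟨by simp [zero_pow, h1, h2], by simp [zero_pow, h1, h3, h2], by simp [zero_pow, h1],
      by simp [zero_pow, h1], by simp [zero_pow, h1], by simp [zero_pow, h1, h2]⟩
  · tfae_have 1 ↔ 2 := aux_qp1 co2 q (q ^ 2 + q) (by ring) a
    tfae_have 2 ↔ 3 := by
      constructor
      · rintro ⟨t, ht, he⟩
        exact ⟨t⁻¹, inv_ne_zero ht, aux_inv ht he⟩
      · rintro ⟨t, ht, he⟩
        exact ⟨t⁻¹, inv_ne_zero ht, aux_inv' ht he⟩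
    tfae_have 3 ↔ 4 := by simpa using aux_frob hq (q ^ 2 + q + 1) 1 a
    tfae_have 5 ↔ 6 := by
      have d1 := aux_qp1 (F := F) co2 1 (q + 1) (by ring) a
      simp only [pow_one] at d1
      exact d1.trans (aux_frob (F := F) hq (q ^ 2 + q + 1) (q + 1) a)
    tfae_have 3 ↔ 6 := by
      have c1 : (∃ t : F, t ≠ 0 ∧ t ^ (q ^ 2 + q + 1) + a * t + 1 = 0) ↔
          (∃ w : F, w ≠ 0 ∧ w ^ q ^ 3 + a * w ^ q + w = 0) := by
        have := aux_wsub (F := F) hq2 co1 hkk hNq a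
        simpa using this
      have c2 := aux_dual (F := F) hm hF hq a
      have c3 := (aux_wsub (F := F) hq2 co1 hk1 hNq (a ^ q ^ 2)).symm
      have c4 := aux_frob (F := F) hq (q ^ 2 + q + 1) (q + 1) (a ^ q)
      have c5 : (a ^ q) ^ q = a ^ q ^ 2 := by rw [← pow_mul, pow_two]
      rw [c5] at c4
      exact c1.trans (c2.trans (c3.trans c4.symm))
    tfae_finish
end

section
/- Let m ≥ 3 be an odd integer, let i be a positive integer with gcd(i,m) = 1, set q = 2^i, and let a ∈ 𝔽_{2^m}^*. Then the polynomial P_a(T) = T^{q²+q+1} + (aT^q + 1)^{q+1} has a root in 𝔽_{2^m} \ {0} if and only if the polynomial P_a'(T) = T^{q²+q+1} + aT^{q²+q} + 1 has a root in 𝔽_{2^m} \ {0}. -/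
theorem stmt_1 (m i : ℕ) (hm : 3 ≤ m) (hmodd : Odd m) (hi : 0 < i)
    (hgcd : Nat.gcd i m = 1) (q : ℕ) (hq : q = 2 ^ i)
    (F : Type*) [Field F] [Fintype F] (hF : Fintype.card F = 2 ^ m)
    (a : F) (ha : a ≠ 0) :
    (∃ t : F, t ≠ 0 ∧ t ^ (q ^ 2 + q + 1) + (a * t ^ q + 1) ^ (q + 1) = 0) ↔
    (∃ t : F, t ≠ 0 ∧ t ^ (q ^ 2 + q + 1) + a * t ^ (q ^ 2 + q) + 1 = 0) := by
  -- characteristic 2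
  have hcast : ((2 ^ m : ℕ) : F) = 0 := by
    rw [← hF]; exact FiniteField.cast_card_eq_zero F
  have hp : (ringChar F).Prime := CharP.char_is_prime F (ringChar F)
  have hdvd : ringChar F ∣ 2 ^ m :=
    (CharP.cast_eq_zero_iff F (ringChar F) (2 ^ m)).mp hcast
  have hchar : ringChar F = 2 :=
    (Nat.prime_dvd_prime_iff_eq hp Nat.prime_two).mp (hp.dvd_of_dvd_pow hdvd)
  haveI : CharP F 2 := hchar ▸ ringChar.charP F
  haveI : Fact (Nat.Prime 2) := ⟨Nat.prime_two⟩
  have h2 : (2 : F) = 0 := by exact_mod_cast CharP.cast_eq_zero F 2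
  have hqne : q ≠ 0 := by rw [hq]; exact pow_ne_zero i two_ne_zero
  -- the q-power map is bijective
  have hqinj : ∀ x y : F, x ^ q = y ^ q → x = y := by
    intro x y h
    have : (x - y) ^ q = 0 := by rw [hq, sub_pow_char_pow, ← hq, h, sub_self]
    exact sub_eq_zero.mp ((pow_eq_zero_iff hqne).mp this)
  have hqsurj : ∀ y : F, ∃ x : F, x ^ q = y :=
    Finite.injective_iff_surjective.mp (fun x y h => hqinj x y h)
  constructor
  · rintro ⟨t, ht0, ht⟩
    obtain ⟨s, hsdef⟩ : ∃ s : F, s = a * t ^ q + 1 := ⟨_, rfl⟩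
    rw [← hsdef] at ht
    have hs : t ^ (q ^ 2 + q + 1) = s ^ (q + 1) := by linear_combination ht - s ^ (q+1) * h2
    have hsne : s ≠ 0 := by
      intro h
      apply ht0
      have : t ^ (q ^ 2 + q + 1) = 0 := by rw [hs, h, zero_pow (by positivity)]
      exact (pow_eq_zero_iff (by positivity)).mp this
    have htqne : t ^ q ≠ 0 := pow_ne_zero _ ht0
    obtain ⟨u, hudef⟩ : ∃ u : F, u = s / t ^ q := ⟨_, rfl⟩
    refine ⟨u, by rw [hudef]; exact div_ne_zero hsne htqne, ?_⟩
    have hua : u + a = (t ^ q)⁻¹ := by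
      rw [hudef, hsdef]
      field_simp
      linear_combination (a * t ^ q) * h2
    have key : u ^ (q ^ 2 + q) = t ^ q := by
      rw [hudef, div_pow, div_eq_iff (pow_ne_zero _ htqne)]
      calc s ^ (q ^ 2 + q) = (s ^ (q + 1)) ^ q := by rw [← pow_mul]; congr 1; ring
        _ = (t ^ (q ^ 2 + q + 1)) ^ q := by rw [hs]
        _ = t ^ q * (t ^ q) ^ (q ^ 2 + q) := by
            rw [← pow_mul, ← pow_mul, ← pow_add]
            congr 1; ring
    have h3 : t ^ q * (t ^ q)⁻¹ = 1 := mul_inv_cancel₀ htqne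
    rw [pow_succ, key]
    linear_combination (t ^ q) * hua + h2 + h3
  · rintro ⟨u, hu0, hu⟩
    have hua : u + a ≠ 0 := by
      intro h
      have hu_eq : u = a := by linear_combination h - a * h2
      rw [hu_eq] at hu
      have : (1 : F) = 0 := by linear_combination hu - a ^ (q ^ 2 + q + 1) * h2
      exact one_ne_zero this
    obtain ⟨t, htq⟩ := hqsurj (u + a)⁻¹
    have ht0 : t ≠ 0 := by
      intro h
      rw [h, zero_pow hqne] at htq
      exact inv_ne_zero hua htq.symm
    refine ⟨t, ht0, ?_⟩
    have hsval : a * t ^ q + 1 = u * (u + a)⁻¹ := by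
      rw [htq]
      field_simp
      linear_combination a * h2
    rw [hsval]
    apply hqinj _ 0
    rw [zero_pow hqne, hq, add_pow_char_pow, ← hq]
    have e1 : (t ^ (q ^ 2 + q + 1)) ^ q = ((u + a)⁻¹) ^ (q ^ 2 + q + 1) := by
      rw [← pow_mul, mul_comm, pow_mul, htq]
    have e2 : ((u * (u + a)⁻¹) ^ (q + 1)) ^ q
        = u ^ (q ^ 2 + q) * ((u + a)⁻¹) ^ (q ^ 2 + q) := by
      rw [mul_pow, mul_pow, ← pow_mul, ← pow_mul]
      have h : (q + 1) * q = q ^ 2 + q := by ring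
      rw [h]
    rw [e1, e2]
    have hinv : (u + a) * (u + a)⁻¹ = 1 := mul_inv_cancel₀ hua
    have hkey : u ^ (q ^ 2 + q) * (u + a) = 1 := by linear_combination hu - h2
    linear_combination ((u + a)⁻¹) ^ (q ^ 2 + q) * (u + a)⁻¹ * hkey
      + u ^ (q ^ 2 + q) * ((u + a)⁻¹) ^ (q ^ 2 + q) * hinv
      + (((u + a)⁻¹) ^ (q ^ 2 + q) * (u + a)⁻¹ + u ^ (q ^ 2 + q) * ((u + a)⁻¹) ^ (q ^ 2 + q)
        - u ^ (q ^ 2 + q) * ((u + a)⁻¹) ^ (q ^ 2 + q) * (u + a) * (u + a)⁻¹) * h2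
end

section
/- Let m ≥ 3 be an odd integer, let i be a positive integer with gcd(i,m) = 1, set q = 2^i, and let a ∈ 𝔽_{2^m}^*. Then the polynomial R_a(T) = T^{q²+q+1} + (aT + 1)^{q+1} has a root in 𝔽_{2^m} \ {0} if and only if the polynomial Q_a(T) = T^{q²+q+1} + aT + 1 has a root in 𝔽_{2^m} \ {0}. -/
open Finset Polynomial

namespace Stmt2Aux

open scoped Classical

variable {F : Type*} [Field F]

private def sfun (m : ℕ) (x : F) : F := ∑ k ∈ Finset.range m, x ^ 2 ^ k

private lemma sfun_add [CharP F 2] (m : ℕ) (x y : F) :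
    sfun m (x + y) = sfun m x + sfun m y := by
  haveI := Fact.mk Nat.prime_two
  unfold sfun
  rw [← Finset.sum_add_distrib]
  exact Finset.sum_congr rfl fun k _ => add_pow_char_pow x y 2 k

private lemma sfun_frob (m : ℕ) (hm : ∀ x : F, x ^ 2 ^ m = x) (x : F) :
    sfun m (x ^ 2) = sfun m x := by
  have key : sfun m (x ^ 2) + x = sfun m x + x := by
    have h1 : ∀ k, (x ^ 2) ^ 2 ^ k = x ^ 2 ^ (k + 1) := by
      intro k
      rw [← pow_mul, pow_succ, mul_comm]
    calc sfun m (x ^ 2) + x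
        = (∑ k ∈ Finset.range m, x ^ 2 ^ (k + 1)) + x ^ 2 ^ 0 := by
          rw [pow_zero, pow_one]
          unfold sfun
          rw [Finset.sum_congr rfl fun k _ => h1 k]
      _ = ∑ k ∈ Finset.range (m + 1), x ^ 2 ^ k :=
          (Finset.sum_range_succ' (fun k => x ^ 2 ^ k) m).symm
      _ = sfun m x + x := by
          rw [Finset.sum_range_succ, hm x]
          rfl
  exact add_right_cancel key

private lemma sfun_sq [CharP F 2] (m : ℕ) (hm : ∀ x : F, x ^ 2 ^ m = x) (x : F) :
    sfun m x ^ 2 = sfun m x := by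
  have h : sfun m x ^ 2 = sfun m (x ^ 2) := by
    unfold sfun
    rw [CharTwo.sum_sq]
    exact Finset.sum_congr rfl fun k _ => by rw [← pow_mul, ← pow_mul, mul_comm]
  rw [h, sfun_frob m hm]

private lemma sfun_eq_one [CharP F 2] (m : ℕ) (hm : ∀ x : F, x ^ 2 ^ m = x) {x : F}
    (hx : sfun m x ≠ 0) : sfun m x = 1 := by
  have h := sfun_sq m hm x
  have h2 : sfun m x * (sfun m x - 1) = 0 := by linear_combination h
  rcases mul_eq_zero.mp h2 with h' | h'
  · exact absurd h' hx
  · exact sub_eq_zero.mp h'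

private lemma sfun_exists [Fintype F] (m : ℕ) (hm : 0 < m) (hF : Fintype.card F = 2 ^ m) :
    ∃ x : F, sfun m x ≠ 0 := by
  by_contra hall
  push_neg at hall
  set P : F[X] := ∑ k ∈ Finset.range m, (X : F[X]) ^ 2 ^ k with hP
  have hev : ∀ x : F, P.eval x = 0 := by
    intro x
    rw [hP, Polynomial.eval_finset_sum]
    simpa [sfun] using hall x
  have hdeg : P.natDegree ≤ 2 ^ (m - 1) := by
    apply Polynomial.natDegree_sum_le_of_forall_le
    intro k hk
    rw [Polynomial.natDegree_X_pow]
    exact Nat.pow_le_pow_right (by norm_num) (by have := Finset.mem_range.mp hk; omega)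
  have hP0 : P = 0 := by
    apply Polynomial.eq_zero_of_natDegree_lt_card_of_eval_eq_zero' P Finset.univ
      (fun x _ => hev x)
    rw [Finset.card_univ, hF]
    exact lt_of_le_of_lt hdeg (Nat.pow_lt_pow_right one_lt_two (by omega))
  have hcoeff : P.coeff (2 ^ (m - 1)) = 1 := by
    rw [hP, Polynomial.finset_sum_coeff]
    have hite : ∀ k ∈ Finset.range m, ((X : F[X]) ^ 2 ^ k).coeff (2 ^ (m - 1))
        = if k = m - 1 then (1 : F) else 0 := by
      intro k _
      rw [Polynomial.coeff_X_pow]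
      congr 1
      simp only [eq_iff_iff]
      constructor
      · intro h; exact (Nat.pow_right_injective (le_refl 2) h).symm
      · rintro rfl; rfl
    rw [Finset.sum_congr rfl hite, Finset.sum_ite_eq' (Finset.range m) (m - 1)
      (fun _ => (1 : F))]
    simp only [Finset.mem_range]
    rw [if_pos (by omega)]
  rw [hP0] at hcoeff
  simp at hcoeff


private noncomputable def psi [CharP F 2] (m : ℕ) (hm : ∀ x : F, x ^ 2 ^ m = x) :
    AddChar F ℂ where
  toFun x := if sfun m x = 0 then 1 else -1
  map_zero_eq_one' := by
    have : sfun (F := F) m 0 = 0 := by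
      unfold sfun
      apply Finset.sum_eq_zero
      intro k _
      exact zero_pow (Nat.two_pow_pos k).ne'
    simp [this]
  map_add_eq_mul' := by
    intro a b
    by_cases ha : sfun m a = 0 <;> by_cases hb : sfun m b = 0
    · simp [sfun_add, ha, hb]
    · simp [sfun_add, ha, hb]
    · simp [sfun_add, ha, hb]
    · have h1 : sfun m a = 1 := sfun_eq_one m hm ha
      have h2 : sfun m b = 1 := sfun_eq_one m hm hb
      have h3 : sfun m (a + b) = 0 := by
        rw [sfun_add, h1, h2, CharTwo.add_self_eq_zero]
      simp [h3, ha, hb]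

private lemma psi_apply [CharP F 2] (m : ℕ) (hm : ∀ x : F, x ^ 2 ^ m = x) (x : F) :
    psi m hm x = if sfun m x = 0 then 1 else -1 := rfl

private lemma psi_frob [CharP F 2] (m : ℕ) (hm : ∀ x : F, x ^ 2 ^ m = x) (x : F) :
    psi m hm (x ^ 2) = psi m hm x := by
  rw [psi_apply, psi_apply, sfun_frob m hm]

private lemma psi_ne_one [CharP F 2] [Fintype F] (m : ℕ) (hm : ∀ x : F, x ^ 2 ^ m = x)
    (h0 : 0 < m) (hF : Fintype.card F = 2 ^ m) : psi m hm ≠ 1 := by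
  obtain ⟨x, hx⟩ := sfun_exists m h0 hF
  rw [AddChar.ne_one_iff]
  refine ⟨x, ?_⟩
  rw [psi_apply, if_neg hx]
  norm_num

private lemma gauss_sq [CharP F 2] [Fintype F] (ψ : AddChar F ℂ)
    (hψ : ∀ x : F, ψ (x ^ 2) = ψ x) (χ : MulChar F ℂ) :
    gaussSum (χ ^ 2) ψ = gaussSum χ ψ := by
  have hbij : Function.Bijective (fun x : F => x ^ 2) := by
    refine Finite.injective_iff_bijective.mp ?_
    intro x y h
    have h2 : (2 : F) = 0 := CharTwo.two_eq_zero
    have hz : (x - y) ^ 2 = 0 := by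
      simp only at h
      linear_combination h + (y ^ 2 - x * y) * h2
    exact sub_eq_zero.mp (pow_eq_zero_iff two_ne_zero |>.mp hz)
  unfold gaussSum
  exact Fintype.sum_bijective _ hbij _ _ fun x => by
    rw [MulChar.pow_apply' χ two_ne_zero, ← map_pow, hψ x]

private lemma gauss_pow [CharP F 2] [Fintype F] (ψ : AddChar F ℂ)
    (hψ : ∀ x : F, ψ (x ^ 2) = ψ x) (k : ℕ) (χ : MulChar F ℂ) :
    gaussSum (χ ^ 2 ^ k) ψ = gaussSum χ ψ := by
  induction k with
  | zero => rw [pow_zero, pow_one]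
  | succ n ih => rw [pow_succ, pow_mul, gauss_sq ψ hψ, ih]


private lemma char_pow_card [Fintype F] {m : ℕ} (hF : Fintype.card F = 2 ^ m)
    (φ : MulChar F ℂ) : φ ^ 2 ^ m = φ := by
  apply MulChar.ext
  intro a
  rw [MulChar.pow_apply' _ (Nat.two_pow_pos m).ne', ← map_pow, ← hF, FiniteField.pow_card]

private lemma char_q_add_one [Fintype F] {m i : ℕ} (hmodd : Odd m) (hi : 0 < i)
    (hF : Fintype.card F = 2 ^ m) {q : ℕ} (hq : q = 2 ^ i) {χ : MulChar F ℂ}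
    (h : χ ^ (q + 1) = 1) : χ = 1 := by
  have hqinv : χ ^ q = χ⁻¹ := by
    apply eq_inv_of_mul_eq_one_left
    rw [← pow_succ]; exact h
  have hq2 : χ ^ (q ^ 2) = χ := by
    rw [pow_two, pow_mul, hqinv, inv_pow, hqinv, inv_inv]
  have heven : ∀ l : ℕ, χ ^ q ^ (2 * l) = χ := by
    intro l
    induction l with
    | zero => simp
    | succ n ih =>
      have he : 2 * (n + 1) = 2 * n + 2 := by ring
      have he2 : q ^ (2 * n + 2) = q ^ (2 * n) * q ^ 2 := pow_add q (2 * n) 2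
      rw [he, he2, pow_mul, ih, hq2]
  obtain ⟨l, hl⟩ := hmodd
  have hodd : χ ^ q ^ m = χ⁻¹ := by
    rw [hl, pow_add, pow_one, pow_mul, heven l, hqinv]
  have hidm : χ ^ q ^ m = χ := by
    have h1 : q ^ m = (2 ^ m) ^ i := by
      rw [hq, ← pow_mul, ← pow_mul, mul_comm]
    rw [h1]
    have h2 : ∀ j : ℕ, χ ^ (2 ^ m) ^ j = χ := by
      intro j
      induction j with
      | zero => simp
      | succ n ih => rw [pow_succ, pow_mul, ih, char_pow_card hF]
    exact h2 i
  have hself : χ⁻¹ = χ := by rw [← hodd, hidm]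
  have hsq : χ ^ 2 = 1 := by
    rw [pow_two]
    nth_rewrite 1 [← hself]
    exact inv_mul_cancel χ
  have hqone : χ ^ q = 1 := by
    obtain ⟨i', rfl⟩ : ∃ i', i = i' + 1 := ⟨i - 1, by omega⟩
    rw [hq, pow_succ, pow_mul, pow_right_comm, hsq, one_pow]
  rw [hqone] at hqinv
  rw [← inv_inv χ, ← hqinv, inv_one]

private lemma sum_eq_jac [Fintype F] [CharP F 2] (χ : MulChar F ℂ) {A B : ℕ}
    (hA : A ≠ 0) (hB : B ≠ 0) :
    ∑ z : F, χ (z ^ A * (z + 1) ^ B) = jacobiSum (χ ^ A) (χ ^ B) := by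
  unfold jacobiSum
  apply Finset.sum_congr rfl
  intro z _
  have h1z : (1 : F) - z = z + 1 := by rw [CharTwo.sub_eq_add, add_comm]
  rw [h1z, map_mul, map_pow, map_pow, MulChar.pow_apply' _ hA, MulChar.pow_apply' _ hB]

private lemma jac_eq [Fintype F] [CharP F 2] {m i : ℕ} (hmodd : Odd m) (hi : 0 < i)
    (hF : Fintype.card F = 2 ^ m) {q : ℕ} (hq : q = 2 ^ i)
    (ψ : AddChar F ℂ) (hψprim : ψ.IsPrimitive) (hψfrob : ∀ x : F, ψ (x ^ 2) = ψ x)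
    (χ : MulChar F ℂ) :
    jacobiSum (χ ^ (q ^ 2 + q)) χ = jacobiSum (χ ^ q ^ 2) (χ ^ (q + 1)) := by
  have hcard0 : (Fintype.card F : ℂ) ≠ 0 := by
    rw [hF]
    exact_mod_cast (pow_ne_zero m (two_ne_zero))
  by_cases hχ : χ = 1
  · subst hχ; simp only [one_pow]
  by_cases hE : χ ^ (q ^ 2 + q + 1) = 1
  · have hq1ne : χ ^ (q + 1) ≠ 1 := fun hcon => hχ (char_q_add_one hmodd hi hF hq hcon)
    have e1 : χ ^ (q ^ 2 + q) = χ⁻¹ := by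
      apply eq_inv_of_mul_eq_one_left
      rw [← pow_succ]; exact hE
    have e2 : χ ^ q ^ 2 = (χ ^ (q + 1))⁻¹ := by
      apply eq_inv_of_mul_eq_one_left
      rw [← pow_add]
      have : q ^ 2 + (q + 1) = q ^ 2 + q + 1 := by ring
      rw [this]; exact hE
    rw [e1, e2, jacobiSum_comm _ χ, jacobiSum_comm _ (χ ^ (q + 1)),
      jacobiSum_nontrivial_inv hχ, jacobiSum_nontrivial_inv hq1ne]
    have hneg : (-1 : F) = 1 := CharTwo.neg_eq 1
    rw [hneg, map_one, map_one]
  · have h1 : χ ^ (q ^ 2 + q) * χ ≠ 1 := by rwa [← pow_succ]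
    have h2 : χ ^ q ^ 2 * χ ^ (q + 1) ≠ 1 := by
      rw [← pow_add]
      have : q ^ 2 + (q + 1) = q ^ 2 + q + 1 := by ring
      rwa [this]
    rw [jacobiSum_eq_gaussSum_mul_gaussSum_div_gaussSum hcard0 h1 hψprim,
      jacobiSum_eq_gaussSum_mul_gaussSum_div_gaussSum hcard0 h2 hψprim]
    have hd : χ ^ (q ^ 2 + q) * χ = χ ^ q ^ 2 * χ ^ (q + 1) := by
      rw [← pow_succ, ← pow_add, ← add_assoc]
    rw [hd]
    congr 1
    have n1 : gaussSum (χ ^ (q ^ 2 + q)) ψ = gaussSum (χ ^ (q + 1)) ψ := by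
      have e : χ ^ (q ^ 2 + q) = (χ ^ (q + 1)) ^ 2 ^ i := by
        rw [← pow_mul, ← hq]
        congr 1
        ring
      rw [e, gauss_pow ψ hψfrob]
    have n2 : gaussSum (χ ^ q ^ 2) ψ = gaussSum χ ψ := by
      have e : χ ^ q ^ 2 = χ ^ 2 ^ (i * 2) := by
        rw [hq, ← pow_mul]
      rw [e, gauss_pow ψ hψfrob]
    rw [n1, n2]
    exact mul_comm _ _


noncomputable instance mcFintype [Fintype F] : Fintype (MulChar F ℂ) :=
  Fintype.ofFinite _

private lemma sum_chars [Fintype F]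
    [HasEnoughRootsOfUnity ℂ (Monoid.exponent Fˣ)] (u : F) :
    ∑ χ : MulChar F ℂ, χ u = if u = 1 then (Fintype.card Fˣ : ℂ) else 0 := by
  split_ifs with h1
  · subst h1
    have hc : Nat.card (MulChar F ℂ) = Nat.card Fˣ :=
      MulChar.card_eq_card_units_of_hasEnoughRootsOfUnity F ℂ
    rw [Nat.card_eq_fintype_card, Nat.card_eq_fintype_card] at hc
    simp [map_one, hc]
  · rcases eq_or_ne u 0 with rfl | h0
    · have hnu : ¬IsUnit (0 : F) := by simp
      simp [MulChar.map_nonunit _ hnu]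
    · obtain ⟨χ₀, hχ₀⟩ := MulChar.exists_apply_ne_one_of_hasEnoughRootsOfUnity F ℂ h1
      refine eq_zero_of_mul_eq_self_left hχ₀ ?_
      simp only [Finset.mul_sum, ← MulChar.mul_apply]
      exact Fintype.sum_bijective _ (Group.mulLeft_bijective χ₀) _ _ fun χ' => rfl

private lemma count_card [Fintype F]
    [HasEnoughRootsOfUnity ℂ (Monoid.exponent Fˣ)]
    (f : F → F) {c : F} (hc : c ≠ 0) :
    ∑ χ : MulChar F ℂ, χ c⁻¹ * ∑ z : F, χ (f z)
      = ((Finset.univ.filter fun z : F => f z = c).card : ℂ) * (Fintype.card Fˣ : ℂ) := by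
  calc ∑ χ : MulChar F ℂ, χ c⁻¹ * ∑ z : F, χ (f z)
      = ∑ χ : MulChar F ℂ, ∑ z : F, χ (f z * c⁻¹) := by
        apply Finset.sum_congr rfl
        intro χ _
        rw [Finset.mul_sum]
        exact Finset.sum_congr rfl fun z _ => by rw [map_mul, mul_comm]
    _ = ∑ z : F, ∑ χ : MulChar F ℂ, χ (f z * c⁻¹) := Finset.sum_comm
    _ = ∑ z : F, if f z = c then (Fintype.card Fˣ : ℂ) else 0 := by
        apply Finset.sum_congr rfl
        intro z _
        rw [sum_chars]
        congr 1
        simp only [eq_iff_iff]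
        exact mul_inv_eq_one₀ hc
    _ = ((Finset.univ.filter fun z : F => f z = c).card : ℂ) * (Fintype.card Fˣ : ℂ) := by
        rw [Finset.sum_ite, Finset.sum_const, Finset.sum_const_zero, add_zero,
          nsmul_eq_mul]

private lemma card_eq_of_sums_eq [Fintype F]
    [HasEnoughRootsOfUnity ℂ (Monoid.exponent Fˣ)]
    (f g : F → F) {c : F} (hc : c ≠ 0)
    (h : ∀ χ : MulChar F ℂ, ∑ z : F, χ (f z) = ∑ z : F, χ (g z)) :
    (Finset.univ.filter fun z : F => f z = c).card
      = (Finset.univ.filter fun z : F => g z = c).card := by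
  have hN : (Fintype.card Fˣ : ℂ) ≠ 0 := by
    exact_mod_cast Fintype.card_ne_zero
  have h1 := count_card f hc
  have h2 := count_card g hc
  rw [Finset.sum_congr rfl fun χ _ => by rw [h χ]] at h1
  rw [h1] at h2
  exact_mod_cast mul_right_cancel₀ hN h2


private lemma redQ [CharP F 2] {q : ℕ} (hq2 : 2 ≤ q) {a : F} (ha : a ≠ 0) :
    (∃ t : F, t ≠ 0 ∧ t ^ (q ^ 2 + q + 1) + a * t + 1 = 0) ↔
    (∃ z : F, z ^ (q ^ 2 + q) * (z + 1) = (a ^ (q ^ 2 + q + 1))⁻¹) := by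
  have h2 : (2 : F) = 0 := CharTwo.two_eq_zero
  have hENE : a ^ (q ^ 2 + q + 1) ≠ 0 := pow_ne_zero _ ha
  constructor
  · rintro ⟨t, ht0, ht⟩
    have h1 : t ^ (q ^ 2 + q + 1) = a * t + 1 := by
      linear_combination ht - (a * t + 1) * h2
    have hu : a * t ≠ 0 := mul_ne_zero ha ht0
    have e0 : (a * t) * (a * t)⁻¹ = 1 := mul_inv_cancel₀ hu
    refine ⟨(a * t)⁻¹, ?_⟩
    apply mul_left_cancel₀ (pow_ne_zero (q ^ 2 + q + 1) hu)
    have e1 : (a * t) ^ (q ^ 2 + q) * ((a * t)⁻¹) ^ (q ^ 2 + q) = 1 := by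
      rw [← mul_pow, e0, one_pow]
    have e2 : (a * t) * ((a * t)⁻¹ + 1) = 1 + a * t := by
      rw [mul_add, e0, mul_one]
    calc (a * t) ^ (q ^ 2 + q + 1) * (((a * t)⁻¹) ^ (q ^ 2 + q) * ((a * t)⁻¹ + 1))
        = ((a * t) ^ (q ^ 2 + q) * ((a * t)⁻¹) ^ (q ^ 2 + q))
            * ((a * t) * ((a * t)⁻¹ + 1)) := by
          rw [pow_succ]; ring
      _ = 1 + a * t := by rw [e1, e2, one_mul]
      _ = t ^ (q ^ 2 + q + 1) := by rw [add_comm, ← h1]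
      _ = (a * t) ^ (q ^ 2 + q + 1) * (a ^ (q ^ 2 + q + 1))⁻¹ := by
          rw [mul_pow, mul_comm (a ^ (q ^ 2 + q + 1)) (t ^ (q ^ 2 + q + 1)), mul_assoc,
            mul_inv_cancel₀ hENE, mul_one]
  · rintro ⟨z, hz⟩
    have hz0 : z ≠ 0 := by
      rintro rfl
      rw [zero_pow (by positivity), zero_mul] at hz
      exact (inv_ne_zero hENE) hz.symm
    have hz' : z ^ (q ^ 2 + q) * (z + 1) * a ^ (q ^ 2 + q + 1) = 1 := by
      rw [hz]; exact inv_mul_cancel₀ hENE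
    have huz : a * z ≠ 0 := mul_ne_zero ha hz0
    have e0 : (a * z) * (a * z)⁻¹ = 1 := mul_inv_cancel₀ huz
    refine ⟨(a * z)⁻¹, inv_ne_zero huz, ?_⟩
    have key : ((a * z)⁻¹) ^ (q ^ 2 + q + 1) = a * (a * z)⁻¹ + 1 := by
      apply mul_left_cancel₀ (pow_ne_zero (q ^ 2 + q + 1) huz)
      have l1 : (a * z) ^ (q ^ 2 + q + 1) * ((a * z)⁻¹) ^ (q ^ 2 + q + 1) = 1 := by
        rw [← mul_pow, e0, one_pow]
      have l2 : (a * z) ^ (q ^ 2 + q + 1) * (a * (a * z)⁻¹ + 1)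
          = a * (a * z) ^ (q ^ 2 + q) + (a * z) ^ (q ^ 2 + q + 1) := by
        rw [mul_add, mul_one, pow_succ]
        congr 1
        calc (a * z) ^ (q ^ 2 + q) * (a * z) * (a * (a * z)⁻¹)
            = a * (a * z) ^ (q ^ 2 + q) * ((a * z) * (a * z)⁻¹) := by ring
          _ = a * (a * z) ^ (q ^ 2 + q) := by rw [e0, mul_one]
      rw [l1, l2, mul_pow, mul_pow]
      linear_combination -hz'
    linear_combination key + (a * (a * z)⁻¹ + 1) * h2

private lemma redR [CharP F 2] {q : ℕ} (hq2 : 2 ≤ q) {a : F} (ha : a ≠ 0) :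
    (∃ t : F, t ≠ 0 ∧ t ^ (q ^ 2 + q + 1) + (a * t + 1) ^ (q + 1) = 0) ↔
    (∃ w : F, w ^ q ^ 2 * (w + 1) ^ (q + 1) = (a ^ (q ^ 2 + q + 1))⁻¹) := by
  have h2 : (2 : F) = 0 := CharTwo.two_eq_zero
  have hENE : a ^ (q ^ 2 + q + 1) ≠ 0 := pow_ne_zero _ ha
  constructor
  · rintro ⟨t, ht0, ht⟩
    have h1 : t ^ (q ^ 2 + q + 1) = (a * t + 1) ^ (q + 1) := by
      linear_combination ht - (a * t + 1) ^ (q + 1) * h2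
    have hu : a * t ≠ 0 := mul_ne_zero ha ht0
    have e0 : (a * t) * (a * t)⁻¹ = 1 := mul_inv_cancel₀ hu
    refine ⟨(a * t)⁻¹, ?_⟩
    apply mul_left_cancel₀ (pow_ne_zero (q ^ 2 + q + 1) hu)
    have esplit : (a * t) ^ (q ^ 2 + q + 1) = (a * t) ^ q ^ 2 * (a * t) ^ (q + 1) := by
      rw [← pow_add, ← add_assoc]
    calc (a * t) ^ (q ^ 2 + q + 1) * (((a * t)⁻¹) ^ q ^ 2 * ((a * t)⁻¹ + 1) ^ (q + 1))
        = ((a * t) ^ q ^ 2 * ((a * t)⁻¹) ^ q ^ 2)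
            * ((a * t) ^ (q + 1) * ((a * t)⁻¹ + 1) ^ (q + 1)) := by
          rw [esplit]; ring
      _ = ((a * t) * ((a * t)⁻¹ + 1)) ^ (q + 1) := by
          rw [← mul_pow, e0, one_pow, one_mul, ← mul_pow]
      _ = (1 + a * t) ^ (q + 1) := by rw [mul_add, e0, mul_one]
      _ = t ^ (q ^ 2 + q + 1) := by rw [add_comm, ← h1]
      _ = (a * t) ^ (q ^ 2 + q + 1) * (a ^ (q ^ 2 + q + 1))⁻¹ := by
          rw [mul_pow, mul_comm (a ^ (q ^ 2 + q + 1)) (t ^ (q ^ 2 + q + 1)), mul_assoc,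
            mul_inv_cancel₀ hENE, mul_one]
  · rintro ⟨w, hw⟩
    have hw0 : w ≠ 0 := by
      rintro rfl
      rw [zero_pow (by positivity), zero_mul] at hw
      exact (inv_ne_zero hENE) hw.symm
    have hw' : w ^ q ^ 2 * (w + 1) ^ (q + 1) * a ^ (q ^ 2 + q + 1) = 1 := by
      rw [hw]; exact inv_mul_cancel₀ hENE
    have huz : a * w ≠ 0 := mul_ne_zero ha hw0
    have e0 : (a * w) * (a * w)⁻¹ = 1 := mul_inv_cancel₀ huz
    refine ⟨(a * w)⁻¹, inv_ne_zero huz, ?_⟩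
    have key : ((a * w)⁻¹) ^ (q ^ 2 + q + 1) = (a * (a * w)⁻¹ + 1) ^ (q + 1) := by
      apply mul_left_cancel₀ (pow_ne_zero (q ^ 2 + q + 1) huz)
      have l1 : (a * w) ^ (q ^ 2 + q + 1) * ((a * w)⁻¹) ^ (q ^ 2 + q + 1) = 1 := by
        rw [← mul_pow, e0, one_pow]
      have esplit : (a * w) ^ (q ^ 2 + q + 1) = (a * w) ^ q ^ 2 * (a * w) ^ (q + 1) := by
        rw [← pow_add, ← add_assoc]
      have l2 : (a * w) ^ (q ^ 2 + q + 1) * (a * (a * w)⁻¹ + 1) ^ (q + 1)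
          = (a * w) ^ q ^ 2 * (a + a * w) ^ (q + 1) := by
        rw [esplit, mul_assoc, ← mul_pow]
        have : (a * w) * (a * (a * w)⁻¹ + 1) = a + a * w := by
          calc (a * w) * (a * (a * w)⁻¹ + 1) = a * ((a * w) * (a * w)⁻¹) + a * w := by ring
            _ = a + a * w := by rw [e0, mul_one]
        rw [this]
      rw [l1, l2]
      have hfac : (a + a * w) = a * (w + 1) := by ring
      rw [hfac, mul_pow, mul_pow]
      linear_combination -hw'
    linear_combination key + (a * (a * w)⁻¹ + 1) ^ (q + 1) * h2

end Stmt2Aux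

theorem stmt_2 (m i : ℕ) (hm : 3 ≤ m) (hmodd : Odd m) (hi : 0 < i)
    (hgcd : Nat.gcd i m = 1) (q : ℕ) (hq : q = 2 ^ i)
    (F : Type*) [Field F] [Fintype F] (hF : Fintype.card F = 2 ^ m)
    (a : F) (ha : a ≠ 0) :
    (∃ t : F, t ≠ 0 ∧ t ^ (q ^ 2 + q + 1) + (a * t + 1) ^ (q + 1) = 0) ↔
    (∃ t : F, t ≠ 0 ∧ t ^ (q ^ 2 + q + 1) + a * t + 1 = 0) := by
  classical
  haveI : CharP F (ringChar F) := ringChar.charP F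
  have hp : (ringChar F).Prime := CharP.char_is_prime F _
  obtain ⟨n, hprime, hcard⟩ := FiniteField.card F (ringChar F)
  have hr2 : ringChar F = 2 := by
    have hdvd : ringChar F ∣ 2 ^ m := by
      rw [← hF, hcard]
      exact dvd_pow_self _ n.pos.ne'
    exact (Nat.prime_dvd_prime_iff_eq hp Nat.prime_two).mp (hp.dvd_of_dvd_pow hdvd)
  haveI h2 : CharP F 2 := hr2 ▸ ringChar.charP F
  haveI := Fact.mk Nat.prime_two
  have hq2 : 2 ≤ q := by
    rw [hq]
    calc 2 = 2 ^ 1 := (pow_one 2).symm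
    _ ≤ 2 ^ i := Nat.pow_le_pow_right (by norm_num) hi
  have hmx : ∀ x : F, x ^ 2 ^ m = x := fun x => by
    rw [← hF]; exact FiniteField.pow_card x
  set ψ := Stmt2Aux.psi m hmx with hψdef
  have hψne : ψ ≠ 1 := Stmt2Aux.psi_ne_one m hmx (by omega) hF
  have hψprim : ψ.IsPrimitive := AddChar.IsPrimitive.of_ne_one hψne
  have hψfrob : ∀ x : F, ψ (x ^ 2) = ψ x := Stmt2Aux.psi_frob m hmx
  haveI : NeZero ((Monoid.exponent Fˣ : ℕ) : ℂ) :=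
    ⟨by exact_mod_cast Monoid.exponent_ne_zero_of_finite⟩
  have hEne : a ^ (q ^ 2 + q + 1) ≠ 0 := pow_ne_zero _ ha
  have hc : (a ^ (q ^ 2 + q + 1))⁻¹ ≠ 0 := inv_ne_zero hEne
  rw [Stmt2Aux.redR hq2 ha, Stmt2Aux.redQ hq2 ha]
  have hq0 : q ≠ 0 := by omega
  have hA1 : q ^ 2 + q ≠ 0 := by
    intro hcon
    rcases Nat.add_eq_zero.mp hcon with ⟨-, h⟩
    exact hq0 h
  have hA2 : q + 1 ≠ 0 := by omega
  have hA3 : q ^ 2 ≠ 0 := pow_ne_zero _ hq0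
  have hkey : ∀ χ : MulChar F ℂ,
      ∑ z : F, χ (z ^ q ^ 2 * (z + 1) ^ (q + 1))
        = ∑ z : F, χ (z ^ (q ^ 2 + q) * (z + 1) ^ 1) := by
    intro χ
    rw [Stmt2Aux.sum_eq_jac χ hA3 hA2, Stmt2Aux.sum_eq_jac χ hA1 one_ne_zero, pow_one]
    exact (Stmt2Aux.jac_eq hmodd hi hF hq ψ hψprim hψfrob χ).symm
  have hcards := Stmt2Aux.card_eq_of_sums_eq
    (fun z : F => z ^ q ^ 2 * (z + 1) ^ (q + 1))
    (fun z : F => z ^ (q ^ 2 + q) * (z + 1) ^ 1) hc hkey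
  simp only [pow_one] at hcards
  constructor
  · rintro ⟨w, hw⟩
    have hpos : 0 < (Finset.univ.filter
        fun z : F => z ^ q ^ 2 * (z + 1) ^ (q + 1) = (a ^ (q ^ 2 + q + 1))⁻¹).card :=
      Finset.card_pos.mpr ⟨w, Finset.mem_filter.mpr ⟨Finset.mem_univ w, hw⟩⟩
    rw [hcards] at hpos
    obtain ⟨z, hzmem⟩ := Finset.card_pos.mp hpos
    exact ⟨z, (Finset.mem_filter.mp hzmem).2⟩
  · rintro ⟨z, hz⟩
    have hpos : 0 < (Finset.univ.filter
        fun w : F => w ^ (q ^ 2 + q) * (w + 1) = (a ^ (q ^ 2 + q + 1))⁻¹).card :=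
      Finset.card_pos.mpr ⟨z, Finset.mem_filter.mpr ⟨Finset.mem_univ z, hz⟩⟩
    rw [← hcards] at hpos
    obtain ⟨w, hwmem⟩ := Finset.card_pos.mp hpos
    exact ⟨w, (Finset.mem_filter.mp hwmem).2⟩
end

section
/- Let m be a positive integer, let i be a positive integer with gcd(i,m) = 1, and set q = 2^i. The Artin–Schreier equation t^q + t = 1 has no solution t in 𝔽_{2^m} if and only if m is odd. -/
lemma sq_idem_pow {F : Type*} [Monoid F] {c : F} (h : c ^ 2 = c) (i : ℕ) :
    c ^ 2 ^ i = c := by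
  induction i with
  | zero => simp
  | succ n ih => rw [pow_succ, pow_mul, ih, h]

theorem stmt_4 (m i : ℕ) (hm : 0 < m) (hi : 0 < i)
    (hgcd : Nat.gcd i m = 1) (q : ℕ) (hq : q = 2 ^ i)
    (F : Type*) [Field F] [Fintype F] (hF : Fintype.card F = 2 ^ m) :
    (¬ ∃ t : F, t ^ q + t = 1) ↔ Odd m := by
  classical
  -- characteristic 2
  have hchar2 : (2 : F) = 0 := by
    have := FiniteField.cast_card_eq_zero F
    rw [hF] at this
    push_cast at this
    exact pow_eq_zero_iff (by omega) |>.mp this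
  have hprime : (ringChar F).Prime := CharP.char_is_prime F (ringChar F)
  haveI hchar : CharP F 2 := by
    have hd : ringChar F ∣ 2 := ringChar.dvd (by exact_mod_cast hchar2)
    have : ringChar F = 2 := (Nat.prime_dvd_prime_iff_eq hprime Nat.prime_two).mp hd
    exact this ▸ ringChar.charP F
  haveI : ExpChar F 2 := ExpChar.prime Nat.prime_two
  constructor
  · -- no solution → m odd; contrapositive: m even → solution
    intro hns
    by_contra hodd
    have heven : Even m := Nat.not_odd_iff_even.mp hodd
    obtain ⟨l, hl⟩ := heven
    -- i is odd
    have hiodd : Odd i := by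
      rcases Nat.even_or_odd i with ⟨c, hc⟩ | ho
      · have : 2 ∣ Nat.gcd i m := Nat.dvd_gcd (by omega) (by omega)
        omega
      · exact ho
    -- 3 divides card Fˣ
    have h3 : 3 ∣ Fintype.card Fˣ := by
      rw [Fintype.card_units, hF, hl]
      clear hl hm
      induction l with
      | zero => simp
      | succ n ih =>
        have h1 : (1:ℕ) ≤ 2 ^ (n + n) := Nat.one_le_two_pow
        have h2 : 2 ^ (n + 1 + (n + 1)) = 4 * 2 ^ (n + n) := by ring
        obtain ⟨c, hc⟩ := ih
        exact ⟨4 * c + 1, by omega⟩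
    haveI : Fact (Nat.Prime 3) := ⟨by norm_num⟩
    obtain ⟨u, hu⟩ := exists_prime_orderOf_dvd_card 3 h3
    set a : F := (u : F) with ha
    have hu3 : u ^ 3 = 1 := by rw [← hu]; exact pow_orderOf_eq_one u
    have ha3 : a ^ 3 = 1 := by
      rw [ha, ← Units.val_pow_eq_pow_val, hu3, Units.val_one]
    have hane : a ≠ 1 := by
      intro h
      have : u = 1 := Units.ext (by simpa [ha] using h)
      rw [this, orderOf_one] at hu; omega
    have hquad : a ^ 2 = a + 1 := by
      have hfac : (a - 1) * (a ^ 2 + a + 1) = 0 := by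
        have : (a - 1) * (a ^ 2 + a + 1) = a ^ 3 - 1 := by ring
        rw [this, ha3, sub_self]
      rcases mul_eq_zero.mp hfac with h | h
      · exact absurd (by linear_combination h) hane
      · linear_combination h - a * hchar2 - hchar2
    have ha4 : a ^ 4 = a := by
      linear_combination (a ^ 2 + a + 2) * hquad + (a + 1) * hchar2
    have h4 : ∀ k : ℕ, a ^ 4 ^ k = a := by
      intro k
      induction k with
      | zero => simp
      | succ n ih => rw [pow_succ, pow_mul, ih, ha4]
    obtain ⟨k, hk⟩ := hiodd
    have haq : a ^ q = a + 1 := by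
      have hqk : q = 4 ^ k * 2 := by
        rw [hq, hk, pow_succ, pow_mul]; norm_num
      rw [hqk, pow_mul, h4 k, ← hquad]
    exact hns ⟨a, by rw [haq]; linear_combination a * hchar2⟩
  · -- m odd → no solution
    rintro hodd ⟨t, ht⟩
    have key : ∀ j : ℕ, t ^ q ^ j = t + (j : F) := by
      intro j
      induction j with
      | zero => simp
      | succ n ih =>
        have h01 : (n : F) = 0 ∨ (n : F) = 1 := by
          rcases Nat.even_or_odd n with ⟨c, hc⟩ | ⟨c, hc⟩
          · left; subst hc; push_cast; linear_combination (c : F) * hchar2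
          · right; subst hc; push_cast; linear_combination (c : F) * hchar2
        have h2 : ((n : F)) ^ 2 = (n : F) := by rcases h01 with h | h <;> rw [h] <;> ring
        have hjq : ((n : F)) ^ q = (n : F) := by rw [hq]; exact sq_idem_pow h2 i
        have hfrob : (t + (n : F)) ^ q = t ^ q + (n : F) ^ q := by
          rw [hq]; exact add_pow_char_pow t _ 2 i
        have htq : t ^ q = 1 + t := by linear_combination ht - t * hchar2
        rw [pow_succ, pow_mul, ih, hfrob, hjq, htq]
        push_cast
        ring
    have hfix : t ^ q ^ m = t := by
      rw [hq, ← pow_mul, mul_comm, pow_mul, ← hF]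
      exact FiniteField.pow_card_pow i t
    have hm1 := key m
    rw [hfix] at hm1
    have hm0 : ((m : F)) = 0 := by linear_combination -hm1
    have : (2 : ℕ) ∣ m := (CharP.cast_eq_zero_iff F 2 m).mp hm0
    obtain ⟨k, hk⟩ := hodd
    omega
end

section
/- Let m ≥ 3 be an odd integer, let i be a positive integer with gcd(i,m) = 1, set q = 2^i, and let a ∈ 𝔽_{2^m}^*. Let d = (A,B,C) ∈ 𝔽_{2^m}³ be a direction in which exactly one of A, B, C is nonzero. Then the differential kernel ker D_d G_a = { v ∈ 𝔽_{2^m}³ : G_a(v + d) + G_a(v) + G_a(d) = 0 } has exactly 2 elements. -/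
/-- The trivariate map `G_a(x,y,z) = (x^{q+1}+a x^q z + y z^q, x^q z + y^{q+1},
x y^q + a y^q z + z^{q+1})`. -/
def Gmap {F : Type*} [Field F] (q : ℕ) (a : F) : F × F × F → F × F × F :=
  fun v =>
    (v.1 ^ (q + 1) + a * v.1 ^ q * v.2.2 + v.2.1 * v.2.2 ^ q,
     v.1 ^ q * v.2.2 + v.2.1 ^ (q + 1),
     v.1 * v.2.1 ^ q + a * v.2.1 ^ q * v.2.2 + v.2.2 ^ (q + 1))

-- Key lemma: fixed points of iterated Frobenius and gcd
section Fix
variable {F : Type*} [Field F] [CharP F 2]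

lemma pow_pow_inj (j : ℕ) : Function.Injective (fun x : F => x ^ 2 ^ j) := by
  have := (iterateFrobenius F 2 j).injective
  exact fun x y h => this (by simpa [iterateFrobenius_def] using h)

lemma fix_mul (t : F) (a : ℕ) (h : t ^ 2 ^ a = t) : ∀ k, t ^ 2 ^ (a * k) = t := by
  intro k
  induction k with
  | zero => simp
  | succ k ih =>
    have : (2:ℕ) ^ (a * (k+1)) = 2 ^ (a * k) * 2 ^ a := by
      rw [← pow_add]; ring_nf
    rw [this, pow_mul, ih, h]

lemma fix_gcd (n m' : ℕ) (t : F) (hn : t ^ 2 ^ n = t) (hm : t ^ 2 ^ m' = t) :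
    t ^ 2 ^ (Nat.gcd n m') = t := by
  induction n, m' using Nat.gcd.induction generalizing t with
  | H0 m' => simpa using hm
  | H1 n m' hpos ih =>
    rw [Nat.gcd_rec]
    apply ih _ _ hn
    -- show t ^ 2 ^ (m' % n) = t
    have hdecomp : m' = n * (m' / n) + m' % n := (Nat.div_add_mod m' n).symm
    have h1 : t ^ 2 ^ (n * (m' / n)) = t := fix_mul t n hn _
    have h2 : (t ^ 2 ^ (m' % n)) ^ 2 ^ (n * (m' / n)) = t ^ 2 ^ (n * (m' / n)) := by
      rw [h1, ← pow_mul, ← pow_add, Nat.add_comm, ← hdecomp, hm]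
    exact pow_pow_inj (n * (m' / n)) h2

end Fix

theorem stmt_5 (m i : ℕ) (hm : 3 ≤ m) (hmodd : Odd m) (hi : 0 < i)
    (hgcd : Nat.gcd i m = 1) (q : ℕ) (hq : q = 2 ^ i)
    (F : Type*) [Field F] [Fintype F] (hF : Fintype.card F = 2 ^ m)
    (a : F) (ha : a ≠ 0) (A B C : F)
    (hd : (A ≠ 0 ∧ B = 0 ∧ C = 0) ∨ (A = 0 ∧ B ≠ 0 ∧ C = 0) ∨
          (A = 0 ∧ B = 0 ∧ C ≠ 0)) :
    {v : F × F × F |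
      Gmap q a (v + (A, B, C)) + Gmap q a v + Gmap q a (A, B, C) = 0}.ncard = 2 := by
  -- char F = 2
  obtain ⟨p, hc⟩ := CharP.exists F
  haveI := hc
  obtain ⟨n, hp, hcard⟩ := FiniteField.card F p
  have hp2 : p = 2 := by
    have : p ∣ 2 ^ m := by rw [← hF, hcard]; exact dvd_pow_self p n.pos.ne'
    have := (Nat.Prime.dvd_of_dvd_pow hp this)
    exact (Nat.prime_dvd_prime_iff_eq hp Nat.prime_two).mp this
  subst hp2
  haveI : CharP F 2 := hc
  -- key: t^q = t → t = 0 ∨ t = 1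
  have key : ∀ t : F, t ^ q = t → t = 0 ∨ t = 1 := by
    intro t ht
    have hm' : t ^ 2 ^ m = t := by rw [← hF]; exact FiniteField.pow_card t
    have := fix_gcd i m t (by rwa [← hq]) hm'
    rw [hgcd, pow_one] at this
    have : t * (t - 1) = 0 := by ring_nf; linear_combination this
    rcases mul_eq_zero.mp this with h | h
    · exact Or.inl h
    · exact Or.inr (sub_eq_zero.mp h)
  -- characteristic 2 twiddle
  have two0 : (2 : F) = 0 := by
    have := CharP.cast_eq_zero F 2; exact_mod_cast this
  have hq0 : q ≠ 0 := by rw [hq]; positivity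
  haveI : Fact (Nat.Prime 2) := ⟨Nat.prime_two⟩
  have hfr : ∀ x y : F, (x + y) ^ q = x ^ q + y ^ q := by
    subst hq; intro x y; exact add_pow_char_pow x y 2 i
  have expand : ∀ v w : F × F × F, Gmap q a (v + w) + Gmap q a v + Gmap q a w =
      (w.1*v.1^q + w.1^q*v.1 + a*(v.1^q*w.2.2 + w.1^q*v.2.2) + v.2.1*w.2.2^q + w.2.1*v.2.2^q,
       v.1^q*w.2.2 + w.1^q*v.2.2 + w.2.1*v.2.1^q + w.2.1^q*v.2.1,
       w.2.1^q*v.1 + w.1*v.2.1^q + a*(v.2.1^q*w.2.2 + w.2.1^q*v.2.2) + w.2.2*v.2.2^q + w.2.2^q*v.2.2) := by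
    rintro ⟨x, y, z⟩ ⟨A', B', C'⟩
    simp only [Gmap, Prod.mk_add_mk, Prod.mk.injEq]
    refine ⟨?_, ?_, ?_⟩ <;> simp only [pow_succ, hfr]
    · linear_combination (x^q*x + A'^q*A' + a*x^q*z + a*A'^q*C' + y*z^q + B'*C'^q) * two0
    · linear_combination (x^q*z + A'^q*C' + y^q*y + B'^q*B') * two0
    · linear_combination (x*y^q + A'*B'^q + a*y^q*z + a*B'^q*C' + z^q*z + C'^q*C') * two0
  have hset : {v : F × F × F |
      Gmap q a (v + (A, B, C)) + Gmap q a v + Gmap q a (A, B, C) = 0} =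
      {0, (A, B, C)} := by
    ext ⟨x, y, z⟩
    rw [Set.mem_setOf_eq, expand]
    rcases hd with ⟨hA, rfl, rfl⟩ | ⟨rfl, hB, rfl⟩ | ⟨rfl, rfl, hC⟩
    · simp only [Prod.mk.injEq, Prod.ext_iff, Prod.mk_zero_zero, Set.mem_insert_iff,
        Set.mem_singleton_iff, Prod.fst_zero, Prod.snd_zero, mul_zero, zero_mul, add_zero,
        zero_add, zero_pow hq0, Prod.mk_eq_zero]
      constructor
      · rintro ⟨h1, h2, h3⟩
        have hz : z = 0 := by
          have := pow_ne_zero q hA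
          rcases mul_eq_zero.mp h2 with h | h
          · exact absurd h this
          · exact h
        have hy : y = 0 := by
          rcases mul_eq_zero.mp h3 with h | h
          · exact absurd h hA
          · exact pow_eq_zero_iff hq0 |>.mp h
        subst hz; subst hy
        simp only [mul_zero, add_zero] at h1
        by_cases hx : x = 0
        · exact Or.inl ⟨hx, rfl, rfl⟩
        · right
          refine ⟨?_, rfl, rfl⟩
          have hAq : A ^ q ≠ 0 := pow_ne_zero _ hA
          have ht : (x * A⁻¹) ^ q = x * A⁻¹ := by
            rw [mul_pow, inv_pow, ← div_eq_mul_inv, ← div_eq_mul_inv,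
              div_eq_div_iff hAq hA]
            linear_combination h1 - x * A ^ q * two0
          rcases key (x * A⁻¹) ht with h | h
          · exfalso
            rcases mul_eq_zero.mp h with h' | h'
            · exact hx h'
            · exact inv_ne_zero hA h'
          · rw [← div_eq_mul_inv, div_eq_one_iff_eq hA] at h
            exact h
      · rintro (⟨rfl, rfl, rfl⟩ | ⟨rfl, rfl, rfl⟩)
        · simp [zero_pow hq0]
        · refine ⟨?_, ?_, ?_⟩
          · linear_combination (x * x^q) * two0
          · simp [zero_pow hq0]
          · simp [zero_pow hq0]
    · simp only [Prod.mk.injEq, Prod.ext_iff, Set.mem_insert_iff,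
        Set.mem_singleton_iff, Prod.fst_zero, Prod.snd_zero, mul_zero, zero_mul, add_zero,
        zero_add, zero_pow hq0, Prod.mk_eq_zero]
      constructor
      · rintro ⟨h1, h2, h3⟩
        have hBq : B ^ q ≠ 0 := pow_ne_zero _ hB
        have hz : z = 0 := by
          rcases mul_eq_zero.mp h1 with h | h
          · exact absurd h hB
          · exact pow_eq_zero_iff hq0 |>.mp h
        subst hz
        have hx : x = 0 := by
          simp only [mul_zero, add_zero] at h3
          rcases mul_eq_zero.mp h3 with h | h
          · exact absurd h hBq
          · exact h
        subst hx
        by_cases hy : y = 0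
        · exact Or.inl ⟨rfl, hy, rfl⟩
        · right
          refine ⟨rfl, ?_, rfl⟩
          have ht : (y * B⁻¹) ^ q = y * B⁻¹ := by
            rw [mul_pow, inv_pow, ← div_eq_mul_inv, ← div_eq_mul_inv,
              div_eq_div_iff hBq hB]
            linear_combination h2 - y * B ^ q * two0
          rcases key (y * B⁻¹) ht with h | h
          · exfalso
            rcases mul_eq_zero.mp h with h' | h'
            · exact hy h'
            · exact inv_ne_zero hB h'
          · rw [← div_eq_mul_inv, div_eq_one_iff_eq hB] at h
            exact h
      · rintro (⟨rfl, rfl, rfl⟩ | ⟨rfl, rfl, rfl⟩)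
        · simp [zero_pow hq0]
        · refine ⟨?_, ?_, ?_⟩
          · simp [zero_pow hq0]
          · linear_combination (y * y ^ q) * two0
          · simp [zero_pow hq0]
    · simp only [Prod.mk.injEq, Prod.ext_iff, Set.mem_insert_iff,
        Set.mem_singleton_iff, Prod.fst_zero, Prod.snd_zero, mul_zero, zero_mul, add_zero,
        zero_add, zero_pow hq0, Prod.mk_eq_zero]
      constructor
      · rintro ⟨h1, h2, h3⟩
        have hCq : C ^ q ≠ 0 := pow_ne_zero _ hC
        have hx : x = 0 := by
          rcases mul_eq_zero.mp h2 with h | h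
          · exact pow_eq_zero_iff hq0 |>.mp h
          · exact absurd h hC
        subst hx
        have hy : y = 0 := by
          simp only [zero_pow hq0, zero_mul, mul_zero, zero_add, add_zero] at h1
          rcases mul_eq_zero.mp h1 with h | h
          · exact h
          · exact absurd h hCq
        subst hy
        simp only [zero_pow hq0, zero_mul, mul_zero, zero_add, add_zero] at h3
        by_cases hz : z = 0
        · exact Or.inl ⟨rfl, rfl, hz⟩
        · right
          refine ⟨rfl, rfl, ?_⟩
          have ht : (z * C⁻¹) ^ q = z * C⁻¹ := by
            rw [mul_pow, inv_pow, ← div_eq_mul_inv, ← div_eq_mul_inv,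
              div_eq_div_iff hCq hC]
            linear_combination h3 - z * C ^ q * two0
          rcases key (z * C⁻¹) ht with h | h
          · exfalso
            rcases mul_eq_zero.mp h with h' | h'
            · exact hz h'
            · exact inv_ne_zero hC h'
          · rw [← div_eq_mul_inv, div_eq_one_iff_eq hC] at h
            exact h
      · rintro (⟨rfl, rfl, rfl⟩ | ⟨rfl, rfl, rfl⟩)
        · simp [zero_pow hq0]
        · refine ⟨?_, ?_, ?_⟩
          · simp [zero_pow hq0]
          · simp [zero_pow hq0]
          · simp only [zero_pow hq0, zero_mul, mul_zero, zero_add, add_zero]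
            linear_combination (z * z ^ q) * two0
  rw [hset]
  refine Set.ncard_pair ?_
  intro h0
  have h0' : (0:F) = A ∧ (0:F) = B ∧ (0:F) = C := by
    rw [show ((0 : F × F × F)) = ((0:F),(0:F),(0:F)) from rfl, Prod.mk.injEq,
      Prod.mk.injEq] at h0
    exact ⟨h0.1, h0.2.1, h0.2.2⟩
  rcases hd with ⟨h, -, -⟩ | ⟨-, h, -⟩ | ⟨-, -, h⟩
  · exact h h0'.1.symm
  · exact h h0'.2.1.symm
  · exact h h0'.2.2.symm
end

section
/- Let m ≥ 3 be an odd integer, let i be a positive integer with gcd(i,m) = 1, set q = 2^i, and let a ∈ 𝔽_{2^m}^*. Let d = (A,B,0) with A, B ∈ 𝔽_{2^m}^*. Then the differential kernel ker D_d G_a = { v ∈ 𝔽_{2^m}³ : G_a(v + d) + G_a(v) + G_a(d) = 0 } has exactly 2^m elements if Q_{a^q}(A/B) = 0, where Q_{a^q}(T) = T^{q²+q+1} + a^q T + 1, and exactly 2 elements otherwise. -/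
private lemma key_ident {R : Type*} [CommRing R] (htwo : (2:R) = 0)
    (x z A B a A1 A2 B1 B2 a1 X1 Y1 Y2 Z1 : R)
    (h2p : B1*Y2 + B2*Y1 + A2*Z1 = 0)
    (h3 : B1*x + A*Y1 + a*B1*z = 0)
    (h3p : B2*X1 + A1*Y2 + a1*B2*Z1 = 0) :
    A2*B1*B2*(A*X1 + A1*x + a*A1*z + B*Z1)
      = (A*A1*A2 + a1*A*B1*B2 + B*B1*B2)*(B1*Y2 + B2*Y1) := by
  linear_combination (A*A2*B1) * h3p + (A1*A2*B2) * h3 + ((B - a1*A)*B1*B2) * h2p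
    - (B*B1*B2^2*Y1 + B*B1^2*B2*Y2 + A*A1*A2*B2*Y1 + A*A1*A2*B1*Y2) * htwo

theorem stmt_6 (m i : ℕ) (hm : 3 ≤ m) (hmodd : Odd m) (hi : 0 < i)
    (hgcd : Nat.gcd i m = 1) (q : ℕ) (hq : q = 2 ^ i)
    (F : Type*) [Field F] [Fintype F] (hF : Fintype.card F = 2 ^ m)
    (a : F) (ha : a ≠ 0) (A B : F) (hA : A ≠ 0) (hB : B ≠ 0) :
    ((A / B) ^ (q ^ 2 + q + 1) + a ^ q * (A / B) + 1 = 0 →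
      {v : F × F × F |
        Gmap q a (v + (A, B, 0)) + Gmap q a v + Gmap q a (A, B, 0) = 0}.ncard
        = 2 ^ m) ∧
    ((A / B) ^ (q ^ 2 + q + 1) + a ^ q * (A / B) + 1 ≠ 0 →
      {v : F × F × F |
        Gmap q a (v + (A, B, 0)) + Gmap q a v + Gmap q a (A, B, 0) = 0}.ncard
        = 2) := by
  -- characteristic 2
  have hp2 : ringChar F = 2 := by
    obtain ⟨n, hpr, hcard⟩ := FiniteField.card F (ringChar F)
    have hdvd : ringChar F ∣ 2 ^ m := by
      rw [← hF, hcard]; exact dvd_pow_self _ n.pos.ne'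
    exact (Nat.prime_dvd_prime_iff_eq hpr Nat.prime_two).mp
      (hpr.dvd_of_dvd_pow hdvd)
  haveI hchar : CharP F 2 := hp2 ▸ ringChar.charP F
  haveI : Fact (Nat.Prime 2) := ⟨Nat.prime_two⟩
  have htwo : (2 : F) = 0 := by exact_mod_cast CharP.cast_eq_zero F 2
  have hq0 : q ≠ 0 := by rw [hq]; positivity
  have hfrob : ∀ u v : F, (u + v) ^ q = u ^ q + v ^ q := by
    intro u v; rw [hq]; exact add_pow_char_pow ..
  have hinj : ∀ u v : F, u ^ q = v ^ q → u = v := by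
    intro u v h
    have h1 : (u + v) ^ q = 0 := by
      rw [hfrob, h]; linear_combination (v ^ q) * htwo
    have h2 := pow_eq_zero_iff hq0 |>.mp h1
    linear_combination h2 - v * htwo
  -- fixed points of the q-power map
  have hcardpow : ∀ u : F, u ^ (2 ^ m) = u := by
    intro u; rw [← hF]; exact FiniteField.pow_card u
  have hiter : ∀ (s : ℕ) (u : F), u ^ (2 ^ s) = u → ∀ k, u ^ (2 ^ (s * k)) = u := by
    intro s u hu k
    induction k with
    | zero => simp
    | succ n ih => rw [Nat.mul_succ, pow_add, pow_mul, ih, hu]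
  have hfix : ∀ u : F, u ^ q = u → u = 0 ∨ u = 1 := by
    intro u hu
    obtain ⟨k, -, hk⟩ := Nat.exists_mul_mod_eq_one_of_coprime hgcd (by omega)
    have hik : i * k = m * (i * k / m) + 1 := by
      conv_lhs => rw [← Nat.div_add_mod (i * k) m]
      rw [hk]
    have h1 : u ^ (2 ^ (i * k)) = u := hiter i u (by rw [← hq]; exact hu) k
    have h2 : u ^ (2 ^ (i * k)) = u ^ 2 := by
      rw [hik, pow_succ, pow_mul, hiter m u (hcardpow u)]
    have h3 : u ^ 2 = u := by rw [← h2, h1]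
    have h4 : u * (u - 1) = 0 := by linear_combination h3
    rcases mul_eq_zero.mp h4 with h | h
    · exact Or.inl h
    · exact Or.inr (by linear_combination h)
  set S := {v : F × F × F |
      Gmap q a (v + (A, B, 0)) + Gmap q a v + Gmap q a (A, B, 0) = 0} with hS
  -- membership as a linear system
  have hmem : ∀ x y z : F, ((x, y, z) : F × F × F) ∈ S ↔
      (A*x^q + A^q*x + a*A^q*z + B*z^q = 0 ∧
       B*y^q + B^q*y + A^q*z = 0 ∧
       B^q*x + A*y^q + a*B^q*z = 0) := by
    intro x y z
    rw [hS]
    simp only [Set.mem_setOf_eq, Gmap, Prod.mk_add_mk, Prod.ext_iff, Prod.fst_add, Prod.snd_add,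
      add_zero, zero_pow hq0, mul_zero, zero_mul, Prod.fst_zero, Prod.snd_zero, pow_succ, hfrob]
    constructor
    · rintro ⟨h1, h2, h3⟩
      refine ⟨by linear_combination h1 - (x^q*x + A^q*A + a*x^q*z + y*z^q)*htwo,
              by linear_combination h2 - (x^q*z + y^q*y + B^q*B)*htwo,
              by linear_combination h3 - (x*y^q + A*B^q + a*y^q*z + z^q*z)*htwo⟩
    · rintro ⟨h1, h2, h3⟩
      refine ⟨by linear_combination h1 + (x^q*x + A^q*A + a*x^q*z + y*z^q)*htwo,
              by linear_combination h2 + (x^q*z + y^q*y + B^q*B)*htwo,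
              by linear_combination h3 + (x*y^q + A*B^q + a*y^q*z + z^q*z)*htwo⟩
  -- structural form
  have hstruct : ∀ x y z : F, ((x, y, z) : F × F × F) ∈ S ↔
      (B*y^q + B^q*y + A^q*z = 0 ∧
       B^q*x + A*y^q + a*B^q*z = 0 ∧
       (A*A^q*(A^q)^q + a^q*A*B^q*(B^q)^q + B*B^q*(B^q)^q) *
          (B^q*(y^q)^q + (B^q)^q*y^q) = 0) := by
    intro x y z
    rw [hmem x y z]
    have mk2 : ∀ h2 : B*y^q + B^q*y + A^q*z = 0,
        B^q*(y^q)^q + (B^q)^q*y^q + (A^q)^q*z^q = 0 := by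
      intro h2
      have := congrArg (· ^ q) h2
      simpa [hfrob, mul_pow, zero_pow hq0] using this
    have mk3 : ∀ h3 : B^q*x + A*y^q + a*B^q*z = 0,
        (B^q)^q*x^q + A^q*(y^q)^q + a^q*(B^q)^q*z^q = 0 := by
      intro h3
      have := congrArg (· ^ q) h3
      simpa [hfrob, mul_pow, zero_pow hq0] using this
    constructor
    · rintro ⟨h1, h2, h3⟩
      refine ⟨h2, h3, ?_⟩
      have hk := key_ident htwo x z A B a (A^q) ((A^q)^q) (B^q) ((B^q)^q) (a^q)
        (x^q) (y^q) ((y^q)^q) (z^q) (mk2 h2) h3 (mk3 h3)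
      rw [h1, mul_zero] at hk
      exact hk.symm
    · rintro ⟨h2, h3, hW⟩
      refine ⟨?_, h2, h3⟩
      have hk := key_ident htwo x z A B a (A^q) ((A^q)^q) (B^q) ((B^q)^q) (a^q)
        (x^q) (y^q) ((y^q)^q) (z^q) (mk2 h2) h3 (mk3 h3)
      rw [hW] at hk
      have hne : (A^q)^q*(B^q)*((B^q)^q) ≠ 0 :=
        mul_ne_zero (mul_ne_zero (pow_ne_zero _ (pow_ne_zero _ hA)) (pow_ne_zero _ hB))
          (pow_ne_zero _ (pow_ne_zero _ hB))
      exact (mul_eq_zero.mp hk).resolve_left hne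
  -- relating Q to the coefficient CA
  have hpowA : ∀ u : F, u ^ (q^2 + q + 1) = u*u^q*(u^q)^q := by
    intro u
    rw [pow_add, pow_add, pow_one, pow_two q, pow_mul]; ring
  have hQCA : ((A/B)^(q^2+q+1) + a^q*(A/B) + 1) * (B*B^q*(B^q)^q)
      = A*A^q*(A^q)^q + a^q*A*B^q*(B^q)^q + B*B^q*(B^q)^q := by
    have hBP : B*B^q*(B^q)^q ≠ 0 :=
      mul_ne_zero (mul_ne_zero hB (pow_ne_zero _ hB)) (pow_ne_zero _ (pow_ne_zero _ hB))
    have t1 : (A/B)^(q^2+q+1) * (B*B^q*(B^q)^q) = A*A^q*(A^q)^q := by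
      rw [hpowA (A/B), div_pow, div_pow, div_mul_div_comm, div_mul_div_comm,
        div_mul_cancel₀ _ hBP]
    have t2 : (a^q*(A/B)) * (B*B^q*(B^q)^q) = a^q*A*B^q*(B^q)^q := by
      field_simp
    rw [add_mul, add_mul, t1, t2, one_mul]
  constructor
  · -- case Q = 0 : kernel has 2^m elements
    intro hQ
    have hCA0 : A*A^q*(A^q)^q + a^q*A*B^q*(B^q)^q + B*B^q*(B^q)^q = 0 := by
      rw [← hQCA, hQ, zero_mul]
    set e : F → F × F × F := fun y =>
      ((A*y^q + a*B^q*((B*y^q + B^q*y)/A^q))/B^q, y, (B*y^q + B^q*y)/A^q) with he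
    have hSrange : S = Set.range e := by
      ext ⟨x, y, z⟩
      rw [hstruct x y z]
      constructor
      · rintro ⟨h2, h3, -⟩
        refine ⟨y, ?_⟩
        have hz : (B*y^q + B^q*y)/A^q = z := by
          rw [div_eq_iff (pow_ne_zero q hA)]
          linear_combination h2 - (A^q*z)*htwo
        have hx : (A*y^q + a*B^q*z)/B^q = x := by
          rw [div_eq_iff (pow_ne_zero q hB)]
          linear_combination h3 - (x*B^q)*htwo
        rw [he]
        refine Prod.ext ?_ (Prod.ext rfl hz)
        show (A*y^q + a*B^q*((B*y^q + B^q*y)/A^q))/B^q = x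
        rw [hz]; exact hx
      · rintro ⟨w, hw⟩
        simp only [he, Prod.mk.injEq] at hw
        obtain ⟨hx, hy, hz⟩ := hw
        subst hy
        rw [← hx, ← hz]
        have hd1 : A^q * ((B*w^q + B^q*w)/A^q) = B*w^q + B^q*w := by
          field_simp
        refine ⟨by rw [hd1]; linear_combination (B*w^q + B^q*w)*htwo, ?_, by rw [hCA0, zero_mul]⟩
        have hd2 : B^q * ((A*w^q + a*B^q*((B*w^q + B^q*w)/A^q))/B^q)
            = A*w^q + a*B^q*((B*w^q + B^q*w)/A^q) := by
          field_simp
        rw [hd2]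
        linear_combination (A*w^q + a*B^q*((B*w^q + B^q*w)/A^q))*htwo
    have hinj_e : Function.Injective e := by
      intro y1 y2 h
      exact congrArg (fun p => p.2.1) h
    rw [hSrange, ← Set.image_univ, Set.ncard_image_of_injective _ hinj_e,
      Set.ncard_univ, Nat.card_eq_fintype_card, hF]
  · -- case Q ≠ 0 : kernel has 2 elements
    intro hQ
    have hCAne : A*A^q*(A^q)^q + a^q*A*B^q*(B^q)^q + B*B^q*(B^q)^q ≠ 0 := by
      rw [← hQCA]
      exact mul_ne_zero hQ (mul_ne_zero (mul_ne_zero hB (pow_ne_zero _ hB))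
        (pow_ne_zero _ (pow_ne_zero _ hB)))
    have hSpair : S = {((0:F), (0:F), (0:F)), (A, B, (0:F))} := by
      ext ⟨x, y, z⟩
      rw [hstruct x y z]
      constructor
      · rintro ⟨h2, h3, hW⟩
        have hW0 : B^q*(y^q)^q + (B^q)^q*y^q = 0 :=
          (mul_eq_zero.mp hW).resolve_left hCAne
        have hu : (y^q/B^q)^q = y^q/B^q := by
          rw [div_pow, div_eq_div_iff (pow_ne_zero _ (pow_ne_zero _ hB)) (pow_ne_zero _ hB)]
          linear_combination hW0 - (y^q*(B^q)^q)*htwo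
        rcases hfix _ hu with h0 | h1
        · -- y = 0, whole vector is 0
          have hy0 : y = 0 := by
            have := (div_eq_zero_iff.mp h0).resolve_right (pow_ne_zero _ hB)
            exact pow_eq_zero_iff hq0 |>.mp this
          subst hy0
          rw [zero_pow hq0] at h2 h3
          have hz0 : z = 0 := by
            have : A^q * z = 0 := by linear_combination h2
            exact (mul_eq_zero.mp this).resolve_left (pow_ne_zero _ hA)
          have hx0 : x = 0 := by
            have : B^q * x = 0 := by linear_combination h3 - (a*B^q)*hz0
            exact (mul_eq_zero.mp this).resolve_left (pow_ne_zero _ hB)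
          left
          simp [hx0, hz0]
        · -- y = B, vector is (A,B,0)
          have hyB : y = B := by
            apply hinj
            rw [div_eq_one_iff_eq (pow_ne_zero _ hB)] at h1
            exact h1
          rw [hyB] at h2 h3
          have hz0 : z = 0 := by
            have : A^q * z = 0 := by linear_combination h2 - (B*B^q)*htwo
            exact (mul_eq_zero.mp this).resolve_left (pow_ne_zero _ hA)
          rw [hz0] at h3
          have hxA : x = A := by
            have h5 : B^q * x = B^q * A := by
              linear_combination h3 - (B^q*A)*htwo
            exact mul_left_cancel₀ (pow_ne_zero _ hB) h5
          right
          simp [hxA, hyB, hz0]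
      · intro h
        simp only [Set.mem_insert_iff, Set.mem_singleton_iff, Prod.mk.injEq] at h
        rcases h with ⟨h1, h2, h3⟩ | ⟨h1, h2, h3⟩ <;> rw [h1, h2, h3]
        · refine ⟨by simp [zero_pow hq0], by simp [zero_pow hq0], by simp [zero_pow hq0]⟩
        · refine ⟨by linear_combination (B*B^q)*htwo, by linear_combination (B^q*A)*htwo, ?_⟩
          linear_combination ((A*A^q*(A^q)^q + a^q*A*B^q*(B^q)^q + B*B^q*(B^q)^q)*(B^q*(B^q)^q))*htwo
    rw [hSpair]
    refine Set.ncard_pair ?_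
    intro h
    exact hA (by simpa using (Prod.ext_iff.mp h).1.symm)
end

section
/- Let m ≥ 3 be an odd integer, let i be a positive integer with gcd(i,m) = 1, set q = 2^i, and let a ∈ 𝔽_{2^m}^*. Define the linearized polynomial L_a(S) = S^{q³} + aS^q + S ∈ 𝔽_{2^m}[S] and the polynomial Q_a(T) = T^{q²+q+1} + aT + 1 ∈ 𝔽_{2^m}[T]. Then L_a has a nonzero root in 𝔽_{2^m} if and only if Q_a has a root in 𝔽_{2^m} \ {0}. -/
lemma stmt_10_factor (F : Type*) [Field F] (q : ℕ) (hq : 2 ≤ q) (a s : F) :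
    s ^ (q ^ 3) + a * s ^ q + s
      = s * ((s ^ (q - 1)) ^ (q ^ 2 + q + 1) + a * s ^ (q - 1) + 1) := by
  obtain ⟨k, rfl⟩ : ∃ k, q = k + 1 := ⟨q - 1, by omega⟩
  simp only [Nat.add_sub_cancel]
  ring

lemma stmt_10_coprime (i m : ℕ) (hm : 0 < m) (hgcd : Nat.gcd i m = 1) :
    Nat.Coprime (2 ^ m - 1) (2 ^ i - 1) := by
  set d := Nat.gcd (2 ^ m - 1) (2 ^ i - 1) with hd
  have h1 : d ∣ 2 ^ m - 1 := Nat.gcd_dvd_left _ _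
  have h2 : d ∣ 2 ^ i - 1 := Nat.gcd_dvd_right _ _
  have hm1 : 1 ≤ 2 ^ m := Nat.one_le_two_pow
  have hi1 : 1 ≤ 2 ^ i := Nat.one_le_two_pow
  have hd0 : d ≠ 0 := by
    intro h
    rw [h] at h1
    have := Nat.eq_zero_of_zero_dvd h1
    have h2m : 2 ^ m ≠ 1 := by
      have : 2 ^ 1 ≤ 2 ^ m := Nat.pow_le_pow_right (by norm_num) hm
      omega
    omega
  haveI : NeZero d := ⟨hd0⟩
  have e1 : ((2 : ℕ) : ZMod d) ^ m = 1 := by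
    rw [← Nat.cast_pow, show (2 : ℕ) ^ m = (2 ^ m - 1) + 1 by omega, Nat.cast_add, Nat.cast_one,
      (ZMod.natCast_eq_zero_iff _ _).2 h1, zero_add]
  have e2 : ((2 : ℕ) : ZMod d) ^ i = 1 := by
    rw [← Nat.cast_pow, show (2 : ℕ) ^ i = (2 ^ i - 1) + 1 by omega, Nat.cast_add, Nat.cast_one,
      (ZMod.natCast_eq_zero_iff _ _).2 h2, zero_add]
  have hord : orderOf ((2 : ℕ) : ZMod d) ∣ Nat.gcd m i :=
    Nat.dvd_gcd (orderOf_dvd_of_pow_eq_one e1) (orderOf_dvd_of_pow_eq_one e2)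
  rw [Nat.gcd_comm, hgcd, Nat.dvd_one, orderOf_eq_one_iff] at hord
  have : ((2 : ℕ) : ZMod d) = ((1 : ℕ) : ZMod d) := by simpa using hord
  have := (ZMod.natCast_eq_natCast_iff _ _ _).1 this
  have := (Nat.modEq_iff_dvd' (by norm_num)).1 this.symm
  have hd1 : d = 1 := Nat.dvd_one.1 this
  exact hd1

theorem stmt_10 (m i : ℕ) (hm : 3 ≤ m) (hmodd : Odd m) (hi : 0 < i)
    (hgcd : Nat.gcd i m = 1) (q : ℕ) (hq : q = 2 ^ i)
    (F : Type*) [Field F] [Fintype F] (hF : Fintype.card F = 2 ^ m)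
    (a : F) (ha : a ≠ 0) :
    (∃ s : F, s ≠ 0 ∧ s ^ (q ^ 3) + a * s ^ q + s = 0) ↔
    (∃ t : F, t ≠ 0 ∧ t ^ (q ^ 2 + q + 1) + a * t + 1 = 0) := by
  have hq2 : 2 ≤ q := by
    rw [hq]
    calc 2 = 2 ^ 1 := by norm_num
    _ ≤ 2 ^ i := Nat.pow_le_pow_right (by norm_num) hi
  constructor
  · rintro ⟨s, hs, heq⟩
    refine ⟨s ^ (q - 1), pow_ne_zero _ hs, ?_⟩
    rw [stmt_10_factor F q hq2 a s] at heq
    rcases mul_eq_zero.1 heq with h | h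
    · exact absurd h hs
    · exact h
  · rintro ⟨t, ht, heq⟩
    classical
    have hc : Nat.Coprime (Nat.card Fˣ) (q - 1) := by
      rw [Nat.card_eq_fintype_card, Fintype.card_units, hF, hq]
      exact stmt_10_coprime i m (by omega) hgcd
    obtain ⟨u, hu⟩ := (powCoprime hc).surjective (Units.mk0 t ht)
    have hut : (u : F) ^ (q - 1) = t := by
      have := congrArg (Units.val) hu
      simpa [powCoprime] using this
    refine ⟨(u : F), u.ne_zero, ?_⟩
    rw [stmt_10_factor F q hq2 a (u : F), hut, heq, mul_zero]
end

section
/- Let m ≥ 3 be an odd integer, let i be a positive integer with gcd(i,m) = 1, and set q = 2^i. Then the polynomial Q_1(T) = T^{q²+q+1} + T + 1 has no root in 𝔽_{2^m} if and only if gcd(m,7) = 1. -/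
open Polynomial

private theorem chain7 {F : Type*} [Field F] (htwo : (2:F) = 0) (x0 x1 x2 x3 x4 x5 x6 x7 : F)
    (h0 : x0*x1*x2 = x0+1) (h1 : x1*x2*x3 = x1+1) (h2 : x2*x3*x4 = x2+1)
    (h3 : x3*x4*x5 = x3+1) (h4 : x4*x5*x6 = x4+1) (h5 : x5*x6*x7 = x5+1) :
    x7 = x0 := by
  have c5 : x7*(x4+1) = x4*(x5+1) := by linear_combination x4*h5 - x7*h4
  have c4 : x7*(x3*(x4+1)) = x3+1+x3*x4 := by linear_combination x3*c5 + h3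
  have c3 : x7*(x2+1+x2*x3) = x2*x3+1 := by linear_combination x2*c4 + (1-x7)*h2 + x2*htwo
  have c2 : x7*(x1*x2+1) = 1 := by
    linear_combination x1*c3 + (x7-1)*h1 + ((x7-1)*(1-x1*x2*x3))*htwo
  have c1 : x0*(x1*x2+1) = 1 := by linear_combination h0 + x0*htwo
  linear_combination x0*c2 - x7*c1

private theorem period_gcd {F : Type*} [Field F] [CharP F 2] (t : F) :
    ∀ a b : ℕ, t^(2^a) = t → t^(2^b) = t → t^(2^(Nat.gcd a b)) = t := by
  intro a b
  induction a, b using Nat.gcd.induction with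
  | H0 n => intro _ h; simpa using h
  | H1 m n hm ih =>
    intro hmt hnt
    rw [Nat.gcd_rec]
    apply ih _ hmt
    have hmul : ∀ k : ℕ, t^(2^(m*k)) = t := by
      intro k
      induction k with
      | zero => simpa using rfl
      | succ k ihk =>
        have e : (2:ℕ)^(m*(k+1)) = 2^(m*k) * 2^m := by rw [← pow_add]; ring_nf
        rw [e, pow_mul, ihk, hmt]
    have hinj : Function.Injective (fun x : F => x^(2^(m*(n/m)))) := by
      have := (iterateFrobenius F 2 (m*(n/m))).injective
      exact fun a b h => this (by simp only [iterateFrobenius_def]; exact h)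
    apply hinj
    show (t^(2^(n % m)))^(2^(m*(n/m))) = t^(2^(m*(n/m)))
    rw [← pow_mul, ← pow_add, Nat.mod_add_div, hnt, hmul]

private theorem powmod7 {F : Type*} [Field F] (α : F) (h : α^(2^7) = α) :
    ∀ n : ℕ, α^(2^n) = α^(2^(n % 7)) := by
  intro n
  induction n using Nat.strong_induction_on with
  | _ n ih =>
    rcases lt_or_ge n 7 with h7|h7
    · rw [Nat.mod_eq_of_lt h7]
    · have e : (2:ℕ)^n = 2^7 * 2^(n-7) := by rw [← pow_add]; congr 1; omega
      rw [e, pow_mul, h, ih (n-7) (by omega)]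
      have e2 : (n-7) % 7 = n % 7 := by omega
      rw [e2]

set_option maxHeartbeats 1600000 in
theorem stmt_11 (m i : ℕ) (hm : 3 ≤ m) (hmodd : Odd m) (hi : 0 < i)
    (hgcd : Nat.gcd i m = 1) (q : ℕ) (hq : q = 2 ^ i)
    (F : Type*) [Field F] [Fintype F] (hF : Fintype.card F = 2 ^ m) :
    (¬ ∃ t : F, t ^ (q ^ 2 + q + 1) + t + 1 = 0) ↔ Nat.gcd m 7 = 1 := by
  -- characteristic 2
  obtain ⟨p, hp⟩ := CharP.exists F
  haveI := hp
  obtain ⟨n, hpprime, hcard⟩ := FiniteField.card F p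
  have hp2 : p = 2 := by
    have hdvd : p ∣ 2^m := by
      rw [← hF, hcard]
      exact dvd_pow_self p (by exact_mod_cast n.ne_zero)
    have h2 := Nat.Prime.dvd_of_dvd_pow hpprime hdvd
    exact (Nat.prime_dvd_prime_iff_eq hpprime Nat.prime_two).mp h2
  subst hp2
  haveI : Fact (Nat.Prime 2) := ⟨Nat.prime_two⟩
  have htwo : (2:F) = 0 := by exact_mod_cast CharP.cast_eq_zero F 2
  haveI : DecidableEq F := Classical.decEq F
  constructor
  · -- no root → gcd m 7 = 1
    intro hno
    by_contra hgne
    have h7m : 7 ∣ m := by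
      have hd := Nat.gcd_dvd_right m 7
      have := (Nat.Prime.eq_one_or_self_of_dvd (by norm_num) _ hd).resolve_left hgne
      rw [← this]
      exact Nat.gcd_dvd_left m 7
    -- 127 divides card of units
    have h127dvd : (127:ℕ) ∣ 2^m - 1 := by
      obtain ⟨k, hk⟩ := h7m
      have h := Nat.sub_dvd_pow_sub_pow ((2:ℕ)^7) 1 k
      rw [← pow_mul, one_pow, ← hk] at h
      norm_num at h
      exact h
    have hNpos : 8 ≤ 2^m := by
      calc (8:ℕ) = 2^3 := rfl
      _ ≤ 2^m := Nat.pow_le_pow_right (by norm_num) hm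
    have hcardu : Fintype.card Fˣ = 2^m - 1 := by rw [Fintype.card_units, hF]
    obtain ⟨g, hg⟩ := IsCyclic.exists_generator (α := Fˣ)
    have horderg : orderOf g = 2^m - 1 := by
      rw [orderOf_eq_card_of_forall_mem_zpowers hg, Nat.card_eq_fintype_card, hcardu]
    set β := g ^ ((2^m - 1) / 127) with hβdef
    have hordβ : orderOf β = 127 := by
      rw [hβdef, orderOf_pow, horderg, Nat.gcd_eq_right (Nat.div_dvd_of_dvd h127dvd),
        Nat.div_div_self h127dvd (by omega)]
    have hβF : (β:F)^127 = 1 := by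
      have h1 := pow_orderOf_eq_one β
      rw [hordβ] at h1
      rw [← Units.val_pow_eq_pow_val, h1, Units.val_one]
    set S : Finset F := insert 0 ((Finset.range 127).image (fun j => (β:F)^j)) with hSdef
    have hcardS : S.card = 128 := by
      rw [hSdef]
      have h0 : (0:F) ∉ (Finset.range 127).image (fun j => (β:F)^j) := by
        simp only [Finset.mem_image, Finset.mem_range, not_exists]
        rintro j ⟨-, hj⟩
        exact pow_ne_zero j (Units.ne_zero β) hj
      rw [Finset.card_insert_of_notMem h0, Finset.card_image_of_injOn, Finset.card_range]
      intro j hj k hk hjk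
      have hjk' : β^j = β^k := Units.ext (by
        simpa only [Units.val_pow_eq_pow_val] using hjk)
      refine pow_injOn_Iio_orderOf ?_ ?_ hjk'
      · simpa [hordβ] using hj
      · simpa [hordβ] using hk
    have hSpow : ∀ x ∈ S, x^128 = x := by
      intro x hx
      rw [hSdef] at hx
      rcases Finset.mem_insert.mp hx with h|h
      · rw [h]; simp
      · obtain ⟨j, -, rfl⟩ := Finset.mem_image.mp h
        calc ((β:F)^j)^128 = (β:F)^(127*j+j) := by
              rw [← pow_mul, show j*128 = 127*j+j from by ring]
        _ = ((β:F)^127)^j * (β:F)^j := by rw [pow_add, pow_mul]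
        _ = (β:F)^j := by rw [hβF, one_pow, one_mul]
    -- explicit cofactor polynomial
    set gp : Polynomial F := (X + X^2 + X^3 + X^4 + X^5 + X^6 + X^7 + X^9 + X^11 + X^13 + X^16 + X^17 + X^20 + X^21 + X^22 + X^24 + X^25 + X^26 + X^28 + X^31 + X^33 + X^34 + X^38 + X^39 + X^41 + X^42 + X^43 + X^44 + X^46 + X^47 + X^49 + X^51 + X^52 + X^54 + X^55 + X^58 + X^61 + X^65 + X^66 + X^67 + X^72 + X^74 + X^75 + X^76 + X^77 + X^78 + X^81 + X^83 + X^85 + X^86 + X^87 + X^90 + X^91 + X^93 + X^97 + X^100 + X^101 + X^102 + X^103 + X^107 + X^109 + X^114 + X^115 + X^121) with hgp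
    have hdeg : gp.natDegree ≤ 121 := by rw [hgp]; compute_degree
    have hgpc : gp.coeff 121 = 1 := by
      rw [hgp]; simp [coeff_X_pow, coeff_X, coeff_one]
    have hne : gp ≠ 0 := fun h => by simp [h] at hgpc
    have hkey : ∀ x : F, x^128 - x = (x^7 + x + 1) * Polynomial.eval x gp := by
      intro x
      rw [hgp]
      simp only [eval_add, eval_pow, eval_X]
      linear_combination (-1 : F) * (x + x^2 + x^3 + x^4 + x^5 + x^6 + x^7 + x^8 + x^9 + x^10 + x^11 + x^12 + x^13 + x^14 + x^16 + x^17 + x^18 + x^20 + x^21 + x^22 + x^23 + x^24 + x^25 + x^26 + x^27 + x^28 + x^29 + x^31 + x^32 + x^33 + x^34 + x^35 + x^38 + x^39 + x^40 + x^41 + x^42 + x^43 + x^44 + x^45 + x^46 + x^47 + x^48 + x^49 + x^50 + x^51 + x^52 + x^53 + x^54 + x^55 + x^56 + x^58 + x^59 + x^61 + x^62 + x^65 + x^66 + x^67 + x^68 + x^72 + x^73 + x^74 + x^75 + x^76 + x^77 + x^78 + x^79 + x^81 + x^82 + x^83 + x^84 + x^85 + x^86 + x^87 + x^88 + x^90 +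 x^91 + x^92 + x^93 + x^94 + x^97 + x^98 + x^100 + x^101 + x^102 + x^103 + x^104 + x^107 + x^108 + x^109 + x^110 + x^114 + x^115 + x^116 + x^121 + x^122) * htwo
    have hnotsub : ¬ S ⊆ gp.roots.toFinset := by
      intro hsub
      have h1 := Finset.card_le_card hsub
      have h2 := (Multiset.toFinset_card_le gp.roots).trans
        ((Polynomial.card_roots' gp).trans hdeg)
      omega
    obtain ⟨α, hαS, hαn⟩ := Finset.not_subset.mp hnotsub
    have hα128 : α^128 = α := hSpow α hαS
    have hGα : Polynomial.eval α gp ≠ 0 := by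
      intro h
      exact hαn (Multiset.mem_toFinset.mpr ((Polynomial.mem_roots hne).mpr h))
    have hfα : (α^7 + α + 1) * Polynomial.eval α gp = 0 := by
      rw [← hkey α, hα128, sub_self]
    have h7 : α^7 = α + 1 := by
      rcases mul_eq_zero.mp hfα with h|h
      · linear_combination h - (α+1)*htwo
      · exact absurd h hGα
    have hα0 : α ≠ 0 := by
      intro h
      rw [h] at h7
      simp at h7
    have h127 : α^127 = 1 := by
      have h1 : α^127 * α = 1 * α := by
        rw [one_mul, ← pow_succ]
        exact (by norm_num : (127:ℕ)+1 = 128) ▸ hα128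
      exact mul_right_cancel₀ hα0 h1
    have hmod7 : ∀ nn : ℕ, α^(2^nn) = α^(2^(nn % 7)) := by
      apply powmod7
      show α^(2^7) = α
      norm_num
      exact hα128
    have hred : ∀ E r : ℕ, E % 127 = r → α^E = α^r := by
      intro E r h
      conv_lhs => rw [← Nat.div_add_mod E 127]
      rw [pow_add, pow_mul, h127, one_pow, one_mul, h]
    have hqe : ∀ c : ℕ, (α^c)^q = α^(c * 2^(i % 7)) := by
      intro c
      calc (α^c)^q = (α^(2^i))^c := by rw [hq, ← pow_mul, mul_comm c (2^i), pow_mul]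
      _ = (α^(2^(i % 7)))^c := by rw [hmod7]
      _ = α^(c * 2^(i % 7)) := by rw [← pow_mul, mul_comm]
    have hqe2 : ∀ c : ℕ, (α^c)^(q^2) = α^(c * 2^((2*i) % 7)) := by
      intro c
      have hqq : q^2 = 2^(2*i) := by rw [hq, ← pow_mul, mul_comm]
      calc (α^c)^(q^2) = (α^(2^(2*i)))^c := by
            rw [hqq, ← pow_mul, mul_comm c (2^(2*i)), pow_mul]
      _ = (α^(2^((2*i) % 7)))^c := by rw [hmod7]
      _ = α^(c * 2^((2*i) % 7)) := by rw [← pow_mul, mul_comm]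
    have hsplit : ∀ tt : F, tt^(q^2+q+1) = tt^(q^2) * tt^q * tt := by
      intro tt; rw [pow_add, pow_add, pow_one]
    have h7i : ¬ (7 ∣ i) := by
      intro hd
      have h1 := Nat.dvd_gcd hd h7m
      rw [hgcd] at h1
      norm_num at h1
    have hi7 : i % 7 = 1 ∨ i % 7 = 2 ∨ i % 7 = 3 ∨ i % 7 = 4 ∨ i % 7 = 5 ∨ i % 7 = 6 := by
      omega
    rcases hi7 with ha|ha|ha|ha|ha|ha
    · -- i % 7 = 1
      have hb : (2*i) % 7 = 2 := by omega
      refine hno ⟨α^1, ?_⟩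
      rw [hsplit, hqe, hqe2, ha, hb]
      norm_num
      linear_combination (1) * h7 + (1 + α) * htwo
    · -- i % 7 = 2
      have hb : (2*i) % 7 = 4 := by omega
      refine hno ⟨α^3, ?_⟩
      rw [hsplit, hqe, hqe2, ha, hb]
      norm_num
      linear_combination ((37)*1 + (17)*α + (29)*α^2 + (56)*α^3 + (70)*α^4 + (56)*α^5 + (28)*α^6 + (9)*α^7 + (8)*α^8 + (21)*α^9 + (35)*α^10 + (35)*α^11 + (21)*α^12 + (7)*α^13 + (2)*α^14 + (6)*α^15 + (15)*α^16 + (20)*α^17 + (15)*α^18 + (6)*α^19 + α^20 + α^21 + (5)*α^22 + (10)*α^23 + (10)*α^24 + (5)*α^25 + α^26 + α^28 + (4)*α^29 + (6)*α^30 + (4)*α^31 + α^32 + α^35 + (3)*α^36 + (3)*α^37 + α^38 + α^42 + (2)*α^43 + α^44 + α^49 + α^50 + α^56) * h7 + ((19)*1 + (27)*α + (23)*α^2 + (43)*α^3 + (63)*α^4 + (63)*α^5 + (42)*α^6) * htwo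
    · -- i % 7 = 3
      have hb : (2*i) % 7 = 6 := by omega
      refine hno ⟨α^27, ?_⟩
      rw [hsplit, hqe, hqe2, ha, hb]
      norm_num
      rw [← pow_add, ← pow_add]
      rw [hred (1728+216+27) 66 (by norm_num)]
      linear_combination ((129)*1 + (129)*α + (85)*α^2 + (37)*α^3 + (17)*α^4 + (29)*α^5 + (57)*α^6 + (72)*α^7 + (57)*α^8 + (28)*α^9 + (9)*α^10 + (8)*α^11 + (21)*α^12 + (36)*α^13 + (36)*α^14 + (21)*α^15 + (7)*α^16 + (2)*α^17 + (6)*α^18 + (15)*α^19 + (21)*α^20 + (15)*α^21 + (6)*α^22 + α^23 + α^24 + (5)*α^25 + (10)*α^26 + (10)*α^27 + (5)*α^28 + α^29 + α^31 + (4)*α^32 + (6)*α^33 + (4)*α^34 + α^35 + α^38 + (3)*α^39 + (3)*α^40 + α^41 + α^45 + (2)*α^46 + α^47 + α^52 + α^53 + α^59) * h7 + ((65)*1 + (129)*α + (107)*α^2 + (61)*α^3 + (27)*α^4 + (23)*α^5 + (43)*α^6) * htwo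
    · -- i % 7 = 4
      have hb : (2*i) % 7 = 1 := by omega
      refine hno ⟨α^15, ?_⟩
      rw [hsplit, hqe, hqe2, ha, hb]
      norm_num
      rw [← pow_add, ← pow_add]
      rw [hred (30+240+15) 31 (by norm_num)]
      linear_combination ((1)*1 + α + α^2 + α^3 + (3)*α^4 + (3)*α^5 + α^6 + α^8 + α^10 + (2)*α^11 + α^12 + α^17 + α^18 + α^24) * h7 + ((1)*1 + α + α^2 + α^3 + (2)*α^4 + (3)*α^5 + (2)*α^6) * htwo
    · -- i % 7 = 5
      have hb : (2*i) % 7 = 3 := by omega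
      refine hno ⟨α^47, ?_⟩
      rw [hsplit, hqe, hqe2, ha, hb]
      norm_num
      rw [← pow_add, ← pow_add]
      rw [hred (376+1504+47) 22 (by norm_num)]
      linear_combination ((15)*1 + (21)*α + (17)*α^2 + (7)*α^3 + α^4 + α^5 + (5)*α^6 + (10)*α^7 + (11)*α^8 + (6)*α^9 + α^10 + α^12 + (4)*α^13 + (6)*α^14 + (5)*α^15 + α^16 + α^19 + (3)*α^20 + (3)*α^21 + α^22 + α^26 + (2)*α^27 + α^28 + α^33 + α^34 + α^40) * h7 + ((8)*1 + (18)*α + (19)*α^2 + (12)*α^3 + (4)*α^4 + α^5 + (3)*α^6) * htwo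
    · -- i % 7 = 6
      have hb : (2*i) % 7 = 5 := by omega
      refine hno ⟨α^29, ?_⟩
      rw [hsplit, hqe, hqe2, ha, hb]
      norm_num
      rw [← pow_add, ← pow_add]
      rw [hred (928+1856+29) 19 (by norm_num)]
      linear_combination ((1)*1 + α + (3)*α^2 + (3)*α^3 + α^4 + α^5 + α^6 + α^8 + (2)*α^9 + α^10 + α^12 + α^15 + α^16 + α^22) * h7 + ((1)*1 + α + (2)*α^2 + (3)*α^3 + (2)*α^4 + α^5 + α^6) * htwo
  · -- gcd m 7 = 1 → no root
    intro hgcd1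
    rintro ⟨t, ht⟩
    have ht0 : t ≠ 0 := by
      intro h
      rw [h] at ht
      rw [zero_pow (by positivity)] at ht
      simp at ht
    have hmain : t^(2^(2*i)) * t^(2^i) * t = t + 1 := by
      have h1 : t^(q^2+q+1) = t + 1 := by linear_combination ht - (t+1)*htwo
      rw [pow_add, pow_add, pow_one, hq, ← pow_mul, mul_comm i 2] at h1
      exact h1
    have hx : ∀ k : ℕ, t^(2^(i*k)) * t^(2^(i*(k+1))) * t^(2^(i*(k+2))) = t^(2^(i*k)) + 1 := by
      intro k
      have h0 : (t^(2^(2*i)) * t^(2^i) * t)^(2^(i*k)) = (t+1)^(2^(i*k)) := by rw [hmain]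
      rw [add_pow_char_pow, one_pow] at h0
      have e1 : 2*i + i*k = i*(k+2) := by ring
      have e2 : i + i*k = i*(k+1) := by ring
      rw [mul_pow, mul_pow, ← pow_mul, ← pow_mul, ← pow_add 2 (2*i) (i*k),
        ← pow_add 2 i (i*k), e1, e2] at h0
      linear_combination h0
    have hseq : t^(2^(i*7)) = t^(2^(i*0)) := by
      have h0 := hx 0
      have h1 := hx 1
      have h2 := hx 2
      have h3 := hx 3
      have h4 := hx 4
      have h5 := hx 5
      norm_num at h0 h1 h2 h3 h4 h5 ⊢
      exact chain7 htwo _ _ _ _ _ _ _ _ h0 h1 h2 h3 h4 h5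
    have hA : t^(2^(7*i)) = t := by
      rw [mul_comm 7 i, hseq]
      norm_num
    have ht2m : t^(2^m) = t := by
      have h1 := FiniteField.pow_card t
      rw [hF] at h1
      exact h1
    have hBgen : ∀ k : ℕ, t^(((2:ℕ)^m)^k) = t := by
      intro k
      induction k with
      | zero => simp
      | succ k ih => rw [pow_succ, pow_mul, ih, ht2m]
    have hB : t^(2^(m*i)) = t := by
      rw [pow_mul]
      exact hBgen i
    have hC : t^(2^i) = t := by
      have h := period_gcd t (7*i) (m*i) hA hB
      rw [Nat.gcd_mul_right, Nat.gcd_comm 7 m, hgcd1, one_mul] at h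
      exact h
    have hD : t^(2^(Nat.gcd i m)) = t := period_gcd t i m hC ht2m
    rw [hgcd] at hD
    have ht2 : t^2 = t := by simpa using hD
    rcases mul_eq_zero.mp (show t*(t-1) = 0 by linear_combination ht2) with h|h
    · exact ht0 h
    · have ht1 : t = 1 := by linear_combination h
      rw [ht1, one_pow] at ht
      have h1 : (1:F) = 0 := by linear_combination ht - htwo
      exact one_ne_zero h1
end

section
/- Let i be a positive integer, set q = 2^i and d = q² + q + 1, and let K be an algebraic closure of the field with two elements. Then the bivariate polynomial φ(X,Y) = X·Y·(Σ_{j=0}^{d−2} X^{d−2−j} Y^j) + 1 is irreducible in the polynomial ring K[X,Y]. -/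
set_option maxHeartbeats 1000000
set_option synthInstance.maxHeartbeats 400000

open MvPolynomial

noncomputable section Stmt13Aux

variable (K : Type*) [Field K]

/-- The ring hom `K[X,Y] → K[X,Y][t]` sending `X ↦ X·t`, `Y ↦ Y·t`. -/
def stmtTheta : MvPolynomial (Fin 2) K →+* Polynomial (MvPolynomial (Fin 2) K) :=
  MvPolynomial.eval₂Hom (Polynomial.C.comp MvPolynomial.C)
    (fun i => Polynomial.C (MvPolynomial.X i) * Polynomial.X)

variable {K}

lemma stmtTheta_C (a : K) : stmtTheta K (C a) = Polynomial.C (C a) := by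
  simp [stmtTheta]

lemma stmtTheta_X (i : Fin 2) :
    stmtTheta K (X i) = Polynomial.C (X i) * Polynomial.X := by
  simp [stmtTheta]

lemma stmtTheta_constant {g : MvPolynomial (Fin 2) K}
    (h : (stmtTheta K g).natDegree = 0) : ∃ c : K, g = C c := by
  obtain ⟨r, hr⟩ := Polynomial.natDegree_eq_zero.mp h
  -- evaluate t := 1 : recovers g
  have hcomp : (Polynomial.evalRingHom (1 : MvPolynomial (Fin 2) K)).comp (stmtTheta K)
      = RingHom.id _ := by
    apply MvPolynomial.ringHom_ext <;> intro x <;> simp [stmtTheta]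
  have hg : g = r := by
    have h1 := congrArg (Polynomial.evalRingHom (1 : MvPolynomial (Fin 2) K)) hr
    have h2 : (Polynomial.evalRingHom (1 : MvPolynomial (Fin 2) K)) (stmtTheta K g) = g := by
      have := congrFun (congrArg (fun f => f.toFun) hcomp) g
      simpa using this
    rw [h2] at h1
    simpa using h1.symm
  -- evaluate t := 0 : gives the constant coefficient
  have hcomp0 : (Polynomial.evalRingHom (0 : MvPolynomial (Fin 2) K)).comp (stmtTheta K)
      = (MvPolynomial.C (σ := Fin 2) (R := K)).comp (MvPolynomial.eval (fun _ => (0 : K))) := by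
    apply MvPolynomial.ringHom_ext <;> intro x <;> simp [stmtTheta]
  have h3 : (Polynomial.evalRingHom (0 : MvPolynomial (Fin 2) K)) (stmtTheta K g)
      = C (MvPolynomial.eval (fun _ => (0 : K)) g) := by
    have := congrFun (congrArg (fun f => f.toFun) hcomp0) g
    simpa using this
  refine ⟨MvPolynomial.eval (fun _ => (0 : K)) g, ?_⟩
  rw [← h3, ← hr]
  simpa using hg

end Stmt13Aux

theorem stmt_13 (i : ℕ) (hi : 0 < i) (q d : ℕ) (hq : q = 2 ^ i)
    (hd : d = q ^ 2 + q + 1)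
    (K : Type*) [Field K] [Algebra (ZMod 2) K] [IsAlgClosure (ZMod 2) K] :
    Irreducible
      ((X 0 : MvPolynomial (Fin 2) K) * X 1 *
        (∑ j ∈ Finset.range (d - 1), (X 0 : MvPolynomial (Fin 2) K) ^ (d - 2 - j) * X 1 ^ j)
        + 1) := by
  -- basic numerology
  have hq2 : 2 ≤ q := by
    rw [hq]
    calc 2 = 2 ^ 1 := (pow_one 2).symm
    _ ≤ 2 ^ i := Nat.pow_le_pow_right (by norm_num) hi
  have hd7 : 7 ≤ d := by rw [hd, sq]; nlinarith
  have hqe : Even q := by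
    rw [hq]; exact (Nat.even_pow).mpr ⟨even_two, hi.ne'⟩
  have hodd : Odd d := by
    rw [hd]
    exact (Even.add (by simpa [sq] using hqe.mul_left q) hqe).add_one
  clear hq hd hi
  set S : MvPolynomial (Fin 2) K :=
    ∑ j ∈ Finset.range (d - 1), (X 0 : MvPolynomial (Fin 2) K) ^ (d - 2 - j) * X 1 ^ j with hS
  set F : MvPolynomial (Fin 2) K := X 0 * X 1 * S with hF
  -- theta computation
  have hθS : stmtTheta K S = Polynomial.C S * Polynomial.X ^ (d - 2) := by
    rw [hS, map_sum, map_sum, Finset.sum_mul]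
    refine Finset.sum_congr rfl fun j hj => ?_
    have hj' : j ≤ d - 2 := by have := Finset.mem_range.mp hj; omega
    rw [map_mul, map_pow, map_pow, stmtTheta_X, stmtTheta_X, mul_pow, mul_pow,
      ← Polynomial.C_pow, ← Polynomial.C_pow, mul_mul_mul_comm, ← Polynomial.C_mul,
      ← pow_add, Nat.sub_add_cancel hj']
  have hθF : stmtTheta K F = Polynomial.C F * Polynomial.X ^ d := by
    have hXd : (Polynomial.X : Polynomial (MvPolynomial (Fin 2) K)) ^ d
        = Polynomial.X ^ 2 * Polynomial.X ^ (d - 2) := by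
      rw [← pow_add]; congr 1; omega
    rw [hF, map_mul, map_mul, stmtTheta_X, stmtTheta_X, hθS, hXd,
      Polynomial.C_mul, Polynomial.C_mul]
    ring
  -- move to the fraction field
  set L := FractionRing (MvPolynomial (Fin 2) K)
  set Θ : MvPolynomial (Fin 2) K →+* Polynomial L :=
    (Polynomial.mapRingHom (algebraMap (MvPolynomial (Fin 2) K) L)).comp (stmtTheta K) with hΘ
  set F' : L := algebraMap (MvPolynomial (Fin 2) K) L F with hF'
  have hΘφ : Θ (F + 1) = Polynomial.C F' * Polynomial.X ^ d + 1 := by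
    rw [hΘ, RingHom.comp_apply, map_add, map_one, hθF]
    simp only [Polynomial.coe_mapRingHom, Polynomial.map_add, Polynomial.map_mul,
      Polynomial.map_pow, Polynomial.map_one, Polynomial.map_C, Polynomial.map_X, hF']
  -- F is divisible by X 0 exactly once
  have hX2F : ¬ ((X 0 : MvPolynomial (Fin 2) K) ^ 2 ∣ F) := by
    rintro ⟨u, hu⟩
    have := congrArg (MvPolynomial.aeval ![(Polynomial.X : Polynomial K), 1]) hu
    rw [hF, hS] at this
    simp only [map_mul, map_pow, map_sum, MvPolynomial.aeval_X, Matrix.cons_val_zero,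
      Matrix.cons_val_one, Matrix.head_cons, one_pow, mul_one] at this
    have hc := congrArg (fun p => Polynomial.coeff p 1) this
    rw [show (1 : ℕ) = 0 + 1 by rfl, Polynomial.coeff_X_mul] at hc
    rw [Polynomial.finset_sum_coeff] at hc
    rw [Finset.sum_eq_single (d - 2)] at hc
    · rw [show d - 2 - (d - 2) = 0 by omega, pow_zero, Polynomial.coeff_one_zero] at hc
      rw [sq, mul_assoc, Polynomial.coeff_X_mul, Polynomial.mul_coeff_zero,
        Polynomial.coeff_X_zero, zero_mul] at hc
      exact one_ne_zero hc
    · intro b hb hbne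
      have hblt : b < d - 1 := Finset.mem_range.mp hb
      rw [Polynomial.coeff_X_pow, if_neg (by omega)]
    · intro hmem
      exact absurd (Finset.mem_range.mpr (by omega)) hmem
  have hFne : F ≠ 0 := fun h => hX2F (h ▸ dvd_zero _)
  have hF'ne : F' ≠ 0 := fun h =>
    hFne (IsFractionRing.injective (MvPolynomial (Fin 2) K) L (by rw [← hF', h, map_zero]))
  -- X 0 is prime
  have hprime : Prime (X 0 : MvPolynomial (Fin 2) K) := by
    rw [← MulEquiv.prime_iff (MvPolynomial.finSuccEquiv K 1).toMulEquiv]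
    have : (MvPolynomial.finSuccEquiv K 1).toMulEquiv (X 0)
        = (Polynomial.X : Polynomial (MvPolynomial (Fin 1) K)) := by
      simpa using MvPolynomial.finSuccEquiv_X_zero (R := K) (n := 1)
    rw [this]
    exact Polynomial.prime_X
  -- the key arithmetic fact: -F' has no p-th roots
  have hroot : ∀ p : ℕ, p.Prime → p ∣ d → ∀ b : L, b ^ p ≠ -F' := by
    intro p hp hpd b hb
    have hpodd : Odd p := by
      rcases hp.eq_two_or_odd' with rfl | h
      · have := Nat.odd_iff.mp hodd
        exfalso
        omega
      · exact h
    have hb2 : (-b) ^ p = F' := by rw [hpodd.neg_pow, hb, neg_neg]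
    have hint : IsIntegral (MvPolynomial (Fin 2) K) (-b) := by
      refine ⟨Polynomial.X ^ p - Polynomial.C F,
        Polynomial.monic_X_pow_sub_C _ hp.ne_zero, ?_⟩
      simp [Polynomial.eval₂_sub, hb2, hF']
    obtain ⟨r, hr⟩ := IsIntegrallyClosed.isIntegral_iff.mp hint
    have hrF : r ^ p = F := by
      apply IsFractionRing.injective (MvPolynomial (Fin 2) K) L
      rw [map_pow, hr, hb2, hF']
    have hXr : (X 0 : MvPolynomial (Fin 2) K) ∣ r := by
      apply hprime.dvd_of_dvd_pow (n := p)
      rw [hrF, hF]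
      exact ⟨X 1 * S, by ring⟩
    refine hX2F ?_
    rw [← hrF]
    calc (X 0 : MvPolynomial (Fin 2) K) ^ 2 ∣ r ^ 2 := pow_dvd_pow_of_dvd hXr 2
    _ ∣ r ^ p := pow_dvd_pow r hp.two_le
  -- the irreducible Kummer polynomial
  have hirr : Irreducible ((Polynomial.X : Polynomial L) ^ d + Polynomial.C F') := by
    have := X_pow_sub_C_irreducible_of_odd hodd hroot
    rwa [map_neg, sub_neg_eq_add] at this
  -- main argument
  rw [show (X 0 : MvPolynomial (Fin 2) K) * X 1 * S + 1 = F + 1 by rw [hF]]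
  have hPdeg : (Polynomial.C F' * Polynomial.X ^ d + 1 : Polynomial L).natDegree = d := by
    rw [show (1 : Polynomial L) = Polynomial.C 1 by simp, Polynomial.natDegree_add_C,
      Polynomial.natDegree_C_mul_X_pow _ _ hF'ne]
  have hφu : ¬ IsUnit (F + 1 : MvPolynomial (Fin 2) K) := by
    intro h
    have h2 := (h.map Θ)
    rw [hΘφ] at h2
    have := Polynomial.natDegree_eq_zero_of_isUnit h2
    omega
  rw [irreducible_iff]
  refine ⟨hφu, fun g h hgh => ?_⟩
  by_contra hcon
  push_neg at hcon
  obtain ⟨hgu, hhu⟩ := hcon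
  set G : Polynomial L := Θ g with hG
  set H : Polynomial L := Θ h with hH
  have hGH : G * H = Polynomial.C F' * Polynomial.X ^ d + 1 := by
    rw [hG, hH, ← map_mul, ← hgh, hΘφ]
  have hc0 : G.coeff 0 * H.coeff 0 = 1 := by
    have hcoe := congrArg (fun p => Polynomial.coeff p 0) hGH
    simp only [Polynomial.mul_coeff_zero, Polynomial.coeff_add, Polynomial.coeff_C_mul,
      Polynomial.coeff_X_pow, Polynomial.coeff_one_zero] at hcoe
    rw [if_neg (by omega : ¬ (0 : ℕ) = d)] at hcoe
    simpa using hcoe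
  have hG0 : G.coeff 0 ≠ 0 := left_ne_zero_of_mul (hc0 ▸ one_ne_zero)
  have hH0 : H.coeff 0 ≠ 0 := right_ne_zero_of_mul (hc0 ▸ one_ne_zero)
  have hGne : G ≠ 0 := fun h' => hG0 (by rw [h']; simp)
  have hHne : H ≠ 0 := fun h' => hH0 (by rw [h']; simp)
  have hdegsum : G.natDegree + H.natDegree = d := by
    rw [← Polynomial.natDegree_mul hGne hHne, hGH, hPdeg]
  -- both factors have positive degree
  have hpos : ∀ (g' : MvPolynomial (Fin 2) K), ¬ IsUnit g' → (Θ g').coeff 0 ≠ 0 →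
      0 < (Θ g').natDegree := by
    intro g' hg'u hg'0
    by_contra hzero
    push_neg at hzero
    have h0 : (Θ g').natDegree = 0 := by omega
    have hθdeg : (stmtTheta K g').natDegree = 0 := by
      rw [hΘ, RingHom.comp_apply] at h0
      simp only [Polynomial.coe_mapRingHom] at h0
      rwa [Polynomial.natDegree_map_eq_of_injective
        (IsFractionRing.injective (MvPolynomial (Fin 2) K) L)] at h0
    obtain ⟨c, rfl⟩ := stmtTheta_constant hθdeg
    have hcne : c ≠ 0 := by
      intro hc
      rw [hc] at hg'0
      simp at hg'0
    exact hg'u ((isUnit_iff_ne_zero.mpr hcne).map MvPolynomial.C)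
  have hGpos : 0 < G.natDegree := hpos g hgu hG0
  have hHpos : 0 < H.natDegree := hpos h hhu hH0
  -- reverse
  have hrev : G.reverse * H.reverse
      = (Polynomial.X : Polynomial L) ^ d + Polynomial.C F' := by
    rw [← Polynomial.reverse_mul_of_domain, hGH]
    unfold Polynomial.reverse
    rw [hPdeg, show (Polynomial.C F' * Polynomial.X ^ d + 1 : Polynomial L)
      = Polynomial.C F' * Polynomial.X ^ d + Polynomial.C 1 * Polynomial.X ^ 0 by simp,
      Polynomial.reflect_add, Polynomial.reflect_C_mul_X_pow, Polynomial.reflect_C_mul_X_pow,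
      Polynomial.revAt_le (le_refl d), Polynomial.revAt_le (Nat.zero_le d)]
    simp [Nat.sub_self]
    ring
  rcases hirr.isUnit_or_isUnit hrev.symm with hu | hu
  · have hle : G.natDegree ≤ G.reverse.natDegree := by
      apply Polynomial.le_natDegree_of_ne_zero
      rwa [Polynomial.coeff_reverse, Polynomial.revAt_le (le_refl _), Nat.sub_self]
    exact Polynomial.not_isUnit_of_natDegree_pos _ (lt_of_lt_of_le hGpos hle) hu
  · have hle : H.natDegree ≤ H.reverse.natDegree := by
      apply Polynomial.le_natDegree_of_ne_zero
      rwa [Polynomial.coeff_reverse, Polynomial.revAt_le (le_refl _), Nat.sub_self]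
    exact Polynomial.not_isUnit_of_natDegree_pos _ (lt_of_lt_of_le hHpos hle) hu
end

section
/- Let m ≥ 3 be an odd integer, let i be a positive integer with gcd(i,m) = 1, set q = 2^i, and let a ∈ 𝔽_{2^m}^*. Then the map H_a : 𝔽_{2^m}³ → 𝔽_{2^m}³ is a bijection if and only if the polynomial P_a'(T) = T^{q²+q+1} + aT^{q²+q} + 1 has no root in 𝔽_{2^m}. -/
/-- The trivariate map `H_a(x,y,z) = (x^{q+1}+a x y^q + y z^q, x y^q + z^{q+1},
x^q z + y^{q+1} + a y^q z)`. -/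
def Hmap {F : Type*} [Field F] (q : ℕ) (a : F) : F × F × F → F × F × F :=
  fun v =>
    (v.1 ^ (q + 1) + a * v.1 * v.2.1 ^ q + v.2.1 * v.2.2 ^ q,
     v.1 * v.2.1 ^ q + v.2.2 ^ (q + 1),
     v.1 ^ q * v.2.2 + v.2.1 ^ (q + 1) + a * v.2.1 ^ q * v.2.2)

namespace Stmt16Aux

variable {F : Type*} [Field F]

/-- Freshman's dream from `(2:F) = 0`. -/
lemma fresh (h2 : (2:F) = 0) (i : ℕ) (x y : F) :
    (x + y) ^ (2^i) = x ^ (2^i) + y ^ (2^i) := by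
  induction i with
  | zero => simp
  | succ n ih =>
      rw [pow_succ, pow_mul, pow_mul, pow_mul, ih]
      linear_combination (x ^ (2^n) * y ^ (2^n)) * h2

lemma pow_two_pow_inj (h2 : (2:F) = 0) (i : ℕ) {x y : F}
    (h : x ^ (2^i) = y ^ (2^i)) : x = y := by
  have h0 : (x + y) ^ (2^i) = 0 := by
    rw [fresh h2, h]
    linear_combination (y ^ (2^i)) * h2
  have hxy : x + y = 0 := by
    have := pow_eq_zero_iff (pow_ne_zero i two_ne_zero) |>.mp h0
    exact this
  linear_combination hxy - y * h2

lemma iter_pow (u : F) (a : ℕ) (hu : u ^ (2^a) = u) (s : ℕ) : u ^ (2^(a*s)) = u := by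
  induction s with
  | zero => simp
  | succ n ih =>
      rw [Nat.mul_succ, pow_add, pow_mul, ih, hu]

/-- Injectivity of `x ↦ x^(2^i+1)` on a field with `2^m` elements, `m` odd, `gcd i m = 1`. -/
lemma powq1_inj [Fintype F] (m i : ℕ) (hm : 3 ≤ m) (hmodd : Odd m)
    (hgcd : Nat.gcd i m = 1) (hF : Fintype.card F = 2^m) :
    Function.Injective (fun x : F => x ^ (2^i + 1)) := by
  intro x y h
  simp only at h
  by_cases hy : y = 0
  · subst hy
    rw [zero_pow (by positivity)] at h
    exact pow_eq_zero_iff (by positivity) |>.mp h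
  · have hu : (x/y) ^ (2^i + 1) = 1 := by
      rw [div_pow, h, div_self (pow_ne_zero _ hy)]
    set u := x / y with hudef
    have hu0 : u ≠ 0 := by
      intro h0
      rw [h0, zero_pow (by positivity)] at hu
      exact zero_ne_one hu
    have hinv : u ^ (2^i) = u⁻¹ := by
      apply eq_inv_of_mul_eq_one_left
      rw [← pow_succ]
      exact hu
    have h1 : u ^ (2^(2*i)) = u := by
      have : (2:ℕ)^(2*i) = 2^i * 2^i := by rw [two_mul, pow_add]
      rw [this, pow_mul, hinv, inv_pow, hinv, inv_inv]
    have hm1 : u ^ (2^m) = u := by rw [← hF]; exact FiniteField.pow_card u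
    have co2i : Nat.Coprime (2*i) m :=
      Nat.Coprime.mul (Nat.coprime_two_left.mpr hmodd) hgcd
    obtain ⟨s, -, hs⟩ := Nat.exists_mul_mod_eq_one_of_coprime co2i (by omega)
    have hdm := Nat.div_add_mod (2*i*s) m
    set t := 2*i*s/m with ht
    have heq : 2*i*s = m*t + 1 := by omega
    have h3 : u ^ (2^(2*i*s)) = u := iter_pow u (2*i) h1 s
    have h4 : u ^ (2^(m*t)) = u := iter_pow u m hm1 t
    have h5 : u^2 = u := by
      rw [heq] at h3
      rw [pow_succ, pow_mul, h4] at h3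
      exact h3
    have hu1 : u = 1 := by
      have hfac : u * (u - 1) = 0 := by linear_combination h5
      rcases mul_eq_zero.mp hfac with h' | h'
      · exact absurd h' hu0
      · exact sub_eq_zero.mp h'
    exact (div_eq_one_iff_eq hy).mp hu1

/-- If `(x,y,z) ≠ 0` is in the kernel of `Hmap`, then `P'_a` has a root. -/
lemma ker_root (h2 : (2:F) = 0) (q : ℕ) (hq0 : q ≠ 0) (a x y z : F)
    (hv : ¬(x = 0 ∧ y = 0 ∧ z = 0))
    (e1 : x^(q+1) + a*x*y^q + y*z^q = 0)
    (e2 : x*y^q + z^(q+1) = 0)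
    (e3 : x^q*z + y^(q+1) + a*y^q*z = 0) :
    ∃ t : F, t^(q^2+q+1) + a*t^(q^2+q) + 1 = 0 := by
  by_cases hy : y = 0
  · subst hy
    rw [zero_pow hq0] at e2
    have hz : z = 0 := by
      have : z^(q+1) = 0 := by linear_combination e2
      exact pow_eq_zero_iff (Nat.succ_ne_zero q) |>.mp this
    subst hz
    have hx : x = 0 := by
      have : x^(q+1) = 0 := by
        rw [zero_pow hq0] at e1
        linear_combination e1
      exact pow_eq_zero_iff (Nat.succ_ne_zero q) |>.mp this
    exact absurd ⟨hx, rfl, rfl⟩ hv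
  · have hz : z ≠ 0 := by
      intro hz0
      subst hz0
      apply hy
      have : y^(q+1) = 0 := by linear_combination e3
      exact pow_eq_zero_iff (Nat.succ_ne_zero q) |>.mp this
    have hxy : x * y^q = z^(q+1) := by linear_combination e2 - z^(q+1)*h2
    have hq2 : (x*y^q)^q = (z^(q+1))^q := by rw [hxy]
    have he3 : x^q*z = y^(q+1) + a*y^q*z := by
      linear_combination e3 - (y^(q+1) + a*y^q*z)*h2
    have key : z^(q^2+q+1) = y^(q^2+q+1) + a*y^(q^2+q)*z := by
      linear_combination y^(q^2)*he3 - z*hq2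
    refine ⟨y/z, ?_⟩
    rw [div_pow, div_pow, mul_div_assoc', div_add_div _ _ (pow_ne_zero _ hz) (pow_ne_zero _ hz),
      div_add_one (mul_ne_zero (pow_ne_zero _ hz) (pow_ne_zero _ hz)), div_eq_zero_iff]
    left
    linear_combination (-(z^(q^2+q)))*key + z^(q^2+q)*z^(q^2+q+1)*h2

/-- cross-product proportionality. -/
lemma parallel (c1 c2 c3 p1 p2 p3 : F)
    (hc : ¬(c1 = 0 ∧ c2 = 0 ∧ c3 = 0)) (hp : ¬(p1 = 0 ∧ p2 = 0 ∧ p3 = 0))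
    (h23 : p2*c3 = p3*c2) (h31 : p3*c1 = p1*c3) (h12 : p1*c2 = p2*c1) :
    ∃ γ : F, γ ≠ 0 ∧ p1 = γ*c1 ∧ p2 = γ*c2 ∧ p3 = γ*c3 := by
  by_cases hc1 : c1 ≠ 0
  · refine ⟨p1/c1, ?_, by field_simp, ?_, ?_⟩
    · intro h0
      have hp1 : p1 = 0 := by
        have := mul_eq_zero_of_left h0 c1
        rwa [div_mul_cancel₀ p1 hc1] at this
      refine hp ⟨hp1, ?_, ?_⟩
      · have : p2*c1 = 0 := by rw [← h12, hp1]; ring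
        exact (mul_eq_zero.mp this).resolve_right hc1
      · have : p3*c1 = 0 := by rw [h31, hp1]; ring
        exact (mul_eq_zero.mp this).resolve_right hc1
    · field_simp
      linear_combination -h12
    · field_simp
      linear_combination h31
  · push_neg at hc1
    by_cases hc2 : c2 ≠ 0
    · refine ⟨p2/c2, ?_, ?_, by field_simp, ?_⟩
      · intro h0
        have hp2 : p2 = 0 := by
          have := mul_eq_zero_of_left h0 c2
          rwa [div_mul_cancel₀ p2 hc2] at this
        refine hp ⟨?_, hp2, ?_⟩
        · have : p1*c2 = 0 := by rw [h12, hp2]; ring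
          exact (mul_eq_zero.mp this).resolve_right hc2
        · have : p3*c2 = 0 := by rw [← h23, hp2]; ring
          exact (mul_eq_zero.mp this).resolve_right hc2
      · field_simp
        linear_combination h12
      · field_simp
        linear_combination -h23
    · push_neg at hc2
      have hc3 : c3 ≠ 0 := by
        intro h0
        exact hc ⟨hc1, hc2, h0⟩
      refine ⟨p3/c3, ?_, ?_, ?_, by field_simp⟩
      · intro h0
        have hp3 : p3 = 0 := by
          have := mul_eq_zero_of_left h0 c3
          rwa [div_mul_cancel₀ p3 hc3] at this
        refine hp ⟨?_, ?_, hp3⟩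
        · have : p1*c3 = 0 := by rw [← h31, hp3]; ring
          exact (mul_eq_zero.mp this).resolve_right hc3
        · have : p2*c3 = 0 := by rw [h23, hp3]; ring
          exact (mul_eq_zero.mp this).resolve_right hc3
      · field_simp
        linear_combination -h31
      · field_simp
        linear_combination h23

end Stmt16Aux

theorem stmt_16 (m i : ℕ) (hm : 3 ≤ m) (hmodd : Odd m) (hi : 0 < i)
    (hgcd : Nat.gcd i m = 1) (q : ℕ) (hq : q = 2 ^ i)
    (F : Type*) [Field F] [Fintype F] (hF : Fintype.card F = 2 ^ m)
    (a : F) (ha : a ≠ 0) :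
    Function.Bijective (Hmap q a) ↔
      (¬ ∃ t : F, t ^ (q ^ 2 + q + 1) + a * t ^ (q ^ 2 + q) + 1 = 0) := by
  have hm0 : m ≠ 0 := by omega
  have h2 : (2:F) = 0 := by
    have hc := FiniteField.cast_card_eq_zero F
    rw [hF] at hc
    push_cast at hc
    exact pow_eq_zero_iff hm0 |>.mp hc
  have hq0 : q ≠ 0 := by rw [hq]; positivity
  have hq10 : q + 1 ≠ 0 := by omega
  have hzp : ∀ n : ℕ, n ≠ 0 → (0:F)^n = 0 := fun n h => zero_pow h
  constructor
  · rintro hbij ⟨t, ht⟩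
    have h0 : Hmap q a (0,0,0) = (0,0,0) := by
      simp [Hmap, hzp q hq0, hzp (q+1) hq10]
    have hv : Hmap q a (1, t^(q+1), t^q) = (0,0,0) := by
      simp only [Hmap, Prod.mk.injEq]
      refine ⟨?_, ?_, ?_⟩
      · linear_combination ht
      · linear_combination (t^(q^2+q))*h2
      · linear_combination (t^q)*ht
    have heq := hbij.injective (hv.trans h0.symm)
    have h1 : (1:F) = 0 := congrArg Prod.fst heq
    exact one_ne_zero h1
  · intro hroot
    rw [← Finite.surjective_iff_bijective]
    rintro ⟨c1, c2, c3⟩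
    by_cases hc : c1 = 0 ∧ c2 = 0 ∧ c3 = 0
    · refine ⟨(0,0,0), ?_⟩
      rw [hc.1, hc.2.1, hc.2.2]
      simp [Hmap, hzp q hq0, hzp (q+1) hq10]
    · have hfs : Function.Surjective (fun x : F => x^(2^i)) := by
        have hinj : Function.Injective (fun x : F => x^(2^i)) := by
          intro x y hxy
          exact Stmt16Aux.pow_two_pow_inj h2 i hxy
        exact (Finite.injective_iff_bijective.mp hinj).surjective
      obtain ⟨e1, he1⟩ := hfs c2
      obtain ⟨e2, he2⟩ := hfs (c1 + a*c2)
      obtain ⟨e3, he3⟩ := hfs c3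
      simp only at he1 he2 he3
      rw [← hq] at he1 he2 he3
      obtain ⟨X, Y, Z, hne, hphi, hd⟩ :
          ∃ X Y Z : F, ¬(X = 0 ∧ Y = 0 ∧ Z = 0) ∧
            X*c3 + Y*c2 + Z*c1 = 0 ∧ X*e1 + Y*e2 + Z*e3 = 0 := by
        by_cases hw : c2*e3 + c1*e2 = 0 ∧ c1*e1 + c3*e3 = 0 ∧ c3*e2 + c2*e1 = 0
        · by_cases hPS : c3 = 0 ∧ c1 = 0
          · refine ⟨0, c1, c2, ?_, ?_, ?_⟩
            · intro h; exact hc ⟨hPS.2, h.2.2, hPS.1⟩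
            · rw [hPS.1, hPS.2]; ring
            · linear_combination hw.1
          · refine ⟨c1, 0, c3, ?_, ?_, ?_⟩
            · intro h; exact hPS ⟨h.2.2, h.1⟩
            · linear_combination (c1*c3)*h2
            · linear_combination hw.2.1
        · refine ⟨c2*e3 + c1*e2, c1*e1 + c3*e3, c3*e2 + c2*e1, hw, ?_, ?_⟩
          · linear_combination (c2*c3*e3 + c1*c3*e2 + c1*c2*e1)*h2
          · linear_combination (c2*e1*e3 + c1*e1*e2 + c3*e2*e3)*h2
      have hpsi : Y^q*c1 + (X^q + a*Y^q)*c2 + Z^q*c3 = 0 := by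
        have h0 : (X*e1 + Y*e2 + Z*e3)^(2^i) = 0 := by
          rw [hd]; exact zero_pow (by positivity)
        rw [Stmt16Aux.fresh h2, Stmt16Aux.fresh h2, mul_pow, mul_pow, mul_pow, ← hq,
            he1, he2, he3] at h0
        linear_combination h0
      have hcr1 : (X*Y^q + Z^(q+1))*c3 + (X^q*Z + Y^(q+1) + a*Y^q*Z)*c2 = 0 := by
        linear_combination Y^q*hphi + Z*hpsi - Y^q*Z*c1*h2
      have hcr2 : (X^q*Z + Y^(q+1) + a*Y^q*Z)*c1 + (X^(q+1) + a*X*Y^q + Y*Z^q)*c3 = 0 := by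
        linear_combination (X^q + a*Y^q)*hphi + Y*hpsi - (X^q*Y + a*Y^(q+1))*c2*h2
      have hcr3 : (X^(q+1) + a*X*Y^q + Y*Z^q)*c2 + (X*Y^q + Z^(q+1))*c1 = 0 := by
        linear_combination Z^q*hphi + X*hpsi - X*Z^q*c3*h2
      have hm1 : (X*Y^q + Z^(q+1))*c3 = (X^q*Z + Y^(q+1) + a*Y^q*Z)*c2 := by
        linear_combination hcr1 - (X^q*Z + Y^(q+1) + a*Y^q*Z)*c2*h2
      have hm2 : (X^q*Z + Y^(q+1) + a*Y^q*Z)*c1 = (X^(q+1) + a*X*Y^q + Y*Z^q)*c3 := by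
        linear_combination hcr2 - (X^(q+1) + a*X*Y^q + Y*Z^q)*c3*h2
      have hm3 : (X^(q+1) + a*X*Y^q + Y*Z^q)*c2 = (X*Y^q + Z^(q+1))*c1 := by
        linear_combination hcr3 - (X*Y^q + Z^(q+1))*c1*h2
      by_cases hp : (X^(q+1) + a*X*Y^q + Y*Z^q = 0) ∧ (X*Y^q + Z^(q+1) = 0) ∧
          (X^q*Z + Y^(q+1) + a*Y^q*Z = 0)
      · exact absurd (Stmt16Aux.ker_root h2 q hq0 a X Y Z hne hp.1 hp.2.1 hp.2.2) hroot
      · obtain ⟨g, hg0, hg1, hg2, hg3⟩ :=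
          Stmt16Aux.parallel c1 c2 c3 (X^(q+1) + a*X*Y^q + Y*Z^q) (X*Y^q + Z^(q+1))
            (X^q*Z + Y^(q+1) + a*Y^q*Z) hc hp hm1 hm2 hm3
        have hq1surj : Function.Surjective (fun x : F => x^(2^i+1)) :=
          (Finite.injective_iff_bijective.mp
            (Stmt16Aux.powq1_inj m i hm hmodd hgcd hF)).surjective
        obtain ⟨lam, hlam⟩ := hq1surj g⁻¹
        simp only at hlam
        rw [← hq] at hlam
        have hkey : lam^(q+1) * g = 1 := by rw [hlam]; exact inv_mul_cancel₀ hg0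
        refine ⟨(lam*X, lam*Y, lam*Z), ?_⟩
        simp only [Hmap, Prod.mk.injEq]
        refine ⟨?_, ?_, ?_⟩
        · linear_combination lam^(q+1)*hg1 + c1*hkey
        · linear_combination lam^(q+1)*hg2 + c2*hkey
        · linear_combination lam^(q+1)*hg3 + c3*hkey
end

section
/- Let m ≥ 3 be an odd integer, let i be a positive integer with gcd(i,m) = 1, set q = 2^i, and let a ∈ 𝔽_{2^m}^*. Then the following three statements are equivalent: (i) there exist μ, ν, ρ, λ₁, λ₂, λ₃ ∈ 𝔽_{2^m}^* such that for all x, y, z ∈ 𝔽_{2^m}, writing (u₁,u₂,u₃) = G_a(λ₁x, λ₂y, λ₃z), one has G_1(x,y,z) = (μu₁, νu₂, ρu₃); (ii) there exist μ, ν, ρ, λ₁, λ₂, λ₃ ∈ 𝔽_{2^m}^* such that for all x, y, z ∈ 𝔽_{2^m}, writing (v₁,v₂,v₃) = H_a(λ₁x, λ₂y, λ₃z), one has H_1(x,y,z) = (μv₁, νv₂, ρv₃); (iii) a^{q²+q+1} = 1. Moreover, the set { a ∈ 𝔽_{2^m}^* : a^{q²+q+1} = 1 } has exactly gcd(q²+q+1,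 2^m − 1) elements. -/
/-- Counting lemma. -/
lemma count_roots_of_unity (F : Type*) [Field F] [Fintype F] (n : ℕ) (hn : 0 < n) :
    {a : F | a ≠ 0 ∧ a ^ n = 1}.ncard = Nat.gcd n (Fintype.card F - 1) := by
  classical
  obtain ⟨ζ, hζ⟩ := IsCyclic.exists_generator (α := Fˣ)
  have hord : orderOf ζ = Fintype.card Fˣ := by
    rw [orderOf_eq_card_of_forall_mem_zpowers hζ, Nat.card_eq_fintype_card]
  have hprimU : IsPrimitiveRoot ζ (Fintype.card Fˣ) := hord ▸ IsPrimitiveRoot.orderOf ζ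
  have hprimF : IsPrimitiveRoot (ζ : F) (Fintype.card Fˣ) :=
    IsPrimitiveRoot.coe_units_iff.mpr hprimU
  have hc : Fintype.card Fˣ = Fintype.card F - 1 := Fintype.card_units F
  have hc0 : 0 < Fintype.card Fˣ := Fintype.card_pos
  set g := Nat.gcd n (Fintype.card Fˣ) with hgdef
  have hg0 : 0 < g := Nat.gcd_pos_of_pos_left _ hn
  have hgd : g ∣ Fintype.card Fˣ := Nat.gcd_dvd_right n (Fintype.card Fˣ)
  have hprod : Fintype.card Fˣ = (Fintype.card Fˣ / g) * g := (Nat.div_mul_cancel hgd).symm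
  have hξ : IsPrimitiveRoot ((ζ : F) ^ (Fintype.card Fˣ / g)) g := hprimF.pow hc0 hprod
  have hset : {a : F | a ≠ 0 ∧ a ^ n = 1} = ↑(Polynomial.nthRootsFinset g (1 : F)) := by
    ext b
    simp only [Set.mem_setOf_eq, Finset.coe_sort_coe, Finset.mem_coe,
      Polynomial.mem_nthRootsFinset hg0 (1 : F)]
    constructor
    · rintro ⟨hb0, hbn⟩
      have h1 : orderOf b ∣ n := orderOf_dvd_of_pow_eq_one hbn
      have h2 : orderOf b ∣ Fintype.card Fˣ := orderOf_dvd_of_pow_eq_one (by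
        rw [hc]
        exact FiniteField.pow_card_sub_one_eq_one b hb0)
      exact orderOf_dvd_iff_pow_eq_one.mp (Nat.dvd_gcd h1 h2)
    · intro hbg
      have hb0 : b ≠ 0 := by
        rintro rfl
        rw [zero_pow hg0.ne'] at hbg
        exact zero_ne_one hbg
      refine ⟨hb0, ?_⟩
      obtain ⟨k, hk⟩ := Nat.gcd_dvd_left n (Fintype.card Fˣ)
      rw [hk, pow_mul, hbg, one_pow]
  rw [hset, Set.ncard_coe_finset, hξ.card_nthRootsFinset, hgdef, hc]

lemma Gcoeff {F : Type*} [Field F] (q : ℕ) (a μ ν ρ l₁ l₂ l₃ : F)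
    (c1 : μ * l₁ ^ (q + 1) = 1) (c2 : μ * (a * l₁ ^ q * l₃) = 1)
    (c3 : μ * (l₂ * l₃ ^ q) = 1)
    (c4 : ν * (l₁ ^ q * l₃) = 1) (c5 : ν * l₂ ^ (q + 1) = 1)
    (c6 : ρ * (l₁ * l₂ ^ q) = 1) (c7 : ρ * (a * l₂ ^ q * l₃) = 1)
    (c8 : ρ * l₃ ^ (q + 1) = 1) :
    ∀ x y z : F,
      Gmap q (1 : F) (x, y, z) =
        (μ * (Gmap q a (l₁ * x, l₂ * y, l₃ * z)).1,
         ν * (Gmap q a (l₁ * x, l₂ * y, l₃ * z)).2.1,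
         ρ * (Gmap q a (l₁ * x, l₂ * y, l₃ * z)).2.2) := by
  intro x y z
  simp only [Gmap]
  refine Prod.ext ?_ (Prod.ext ?_ ?_) <;> simp only
  · linear_combination (-(x ^ (q + 1))) * c1 - (x ^ q * z) * c2 - (y * z ^ q) * c3
  · linear_combination (-(x ^ q * z)) * c4 - (y ^ (q + 1)) * c5
  · linear_combination (-(x * y ^ q)) * c6 - (y ^ q * z) * c7 - (z ^ (q + 1)) * c8

lemma Hcoeff {F : Type*} [Field F] (q : ℕ) (a μ ν ρ l₁ l₂ l₃ : F)
    (d1 : μ * l₁ ^ (q + 1) = 1) (d2 : μ * (a * l₁ * l₂ ^ q) = 1)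
    (d3 : μ * (l₂ * l₃ ^ q) = 1)
    (d4 : ν * (l₁ * l₂ ^ q) = 1) (d5 : ν * l₃ ^ (q + 1) = 1)
    (d6 : ρ * (l₁ ^ q * l₃) = 1) (d7 : ρ * l₂ ^ (q + 1) = 1)
    (d8 : ρ * (a * l₂ ^ q * l₃) = 1) :
    ∀ x y z : F,
      Hmap q (1 : F) (x, y, z) =
        (μ * (Hmap q a (l₁ * x, l₂ * y, l₃ * z)).1,
         ν * (Hmap q a (l₁ * x, l₂ * y, l₃ * z)).2.1,
         ρ * (Hmap q a (l₁ * x, l₂ * y, l₃ * z)).2.2) := by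
  intro x y z
  simp only [Hmap]
  refine Prod.ext ?_ (Prod.ext ?_ ?_) <;> simp only
  · linear_combination (-(x ^ (q + 1))) * d1 - (x * y ^ q) * d2 - (y * z ^ q) * d3
  · linear_combination (-(x * y ^ q)) * d4 - (z ^ (q + 1)) * d5
  · linear_combination (-(x ^ q * z)) * d6 - (y ^ (q + 1)) * d7 - (y ^ q * z) * d8

lemma G_sufficient {F : Type*} [Field F] (q : ℕ) (a : F) (ha : a ≠ 0)
    (h3 : a ^ (q ^ 2 + q + 1) = 1) :
    ∃ μ ν ρ l₁ l₂ l₃ : F, μ ≠ 0 ∧ ν ≠ 0 ∧ ρ ≠ 0 ∧ l₁ ≠ 0 ∧ l₂ ≠ 0 ∧ l₃ ≠ 0 ∧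
      ∀ x y z : F,
        Gmap q (1 : F) (x, y, z) =
          (μ * (Gmap q a (l₁ * x, l₂ * y, l₃ * z)).1,
           ν * (Gmap q a (l₁ * x, l₂ * y, l₃ * z)).2.1,
           ρ * (Gmap q a (l₁ * x, l₂ * y, l₃ * z)).2.2) := by
  have hpow : ∀ k : ℕ, a ^ ((q ^ 2 + q + 1) * k) = 1 := fun k => by
    rw [pow_mul, h3, one_pow]
  refine ⟨a ^ (q ^ 2), a ^ (q ^ 2 + 1), 1, a, a ^ (q + 1), 1,
    pow_ne_zero _ ha, pow_ne_zero _ ha, one_ne_zero, ha, pow_ne_zero _ ha, one_ne_zero, ?_⟩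
  refine Gcoeff q a _ _ _ _ _ _ ?_ ?_ ?_ ?_ ?_ ?_ ?_ ?_
  · calc a ^ (q ^ 2) * a ^ (q + 1) = a ^ ((q ^ 2 + q + 1) * 1) := by ring
      _ = 1 := hpow 1
  · calc a ^ (q ^ 2) * (a * a ^ q * 1) = a ^ ((q ^ 2 + q + 1) * 1) := by ring
      _ = 1 := hpow 1
  · calc a ^ (q ^ 2) * (a ^ (q + 1) * (1 : F) ^ q) = a ^ ((q ^ 2 + q + 1) * 1) := by ring
      _ = 1 := hpow 1
  · calc a ^ (q ^ 2 + 1) * (a ^ q * 1) = a ^ ((q ^ 2 + q + 1) * 1) := by ring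
      _ = 1 := hpow 1
  · calc a ^ (q ^ 2 + 1) * (a ^ (q + 1)) ^ (q + 1) = a ^ ((q ^ 2 + q + 1) * 2) := by ring
      _ = 1 := hpow 2
  · calc (1 : F) * (a * (a ^ (q + 1)) ^ q) = a ^ ((q ^ 2 + q + 1) * 1) := by ring
      _ = 1 := hpow 1
  · calc (1 : F) * (a * (a ^ (q + 1)) ^ q * 1) = a ^ ((q ^ 2 + q + 1) * 1) := by ring
      _ = 1 := hpow 1
  · calc (1 : F) * (1 : F) ^ (q + 1) = a ^ ((q ^ 2 + q + 1) * 0) := by ring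
      _ = 1 := hpow 0

lemma H_sufficient {F : Type*} [Field F] (q : ℕ) (a : F) (ha : a ≠ 0)
    (h3 : a ^ (q ^ 2 + q + 1) = 1) :
    ∃ μ ν ρ l₁ l₂ l₃ : F, μ ≠ 0 ∧ ν ≠ 0 ∧ ρ ≠ 0 ∧ l₁ ≠ 0 ∧ l₂ ≠ 0 ∧ l₃ ≠ 0 ∧
      ∀ x y z : F,
        Hmap q (1 : F) (x, y, z) =
          (μ * (Hmap q a (l₁ * x, l₂ * y, l₃ * z)).1,
           ν * (Hmap q a (l₁ * x, l₂ * y, l₃ * z)).2.1,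
           ρ * (Hmap q a (l₁ * x, l₂ * y, l₃ * z)).2.2) := by
  have hpow : ∀ k : ℕ, a ^ ((q ^ 2 + q + 1) * k) = 1 := fun k => by
    rw [pow_mul, h3, one_pow]
  refine ⟨1, a, a ^ (q ^ 2 + 1), 1, a ^ (q + 1), a ^ q,
    one_ne_zero, ha, pow_ne_zero _ ha, one_ne_zero, pow_ne_zero _ ha, pow_ne_zero _ ha, ?_⟩
  refine Hcoeff q a _ _ _ _ _ _ ?_ ?_ ?_ ?_ ?_ ?_ ?_ ?_
  · calc (1 : F) * (1 : F) ^ (q + 1) = a ^ ((q ^ 2 + q + 1) * 0) := by ring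
      _ = 1 := hpow 0
  · calc (1 : F) * (a * 1 * (a ^ (q + 1)) ^ q) = a ^ ((q ^ 2 + q + 1) * 1) := by ring
      _ = 1 := hpow 1
  · calc (1 : F) * (a ^ (q + 1) * (a ^ q) ^ q) = a ^ ((q ^ 2 + q + 1) * 1) := by ring
      _ = 1 := hpow 1
  · calc a * ((1 : F) * (a ^ (q + 1)) ^ q) = a ^ ((q ^ 2 + q + 1) * 1) := by ring
      _ = 1 := hpow 1
  · calc a * (a ^ q) ^ (q + 1) = a ^ ((q ^ 2 + q + 1) * 1) := by ring
      _ = 1 := hpow 1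
  · calc a ^ (q ^ 2 + 1) * ((1 : F) ^ q * a ^ q) = a ^ ((q ^ 2 + q + 1) * 1) := by ring
      _ = 1 := hpow 1
  · calc a ^ (q ^ 2 + 1) * (a ^ (q + 1)) ^ (q + 1) = a ^ ((q ^ 2 + q + 1) * 2) := by ring
      _ = 1 := hpow 2
  · calc a ^ (q ^ 2 + 1) * (a * (a ^ (q + 1)) ^ q * a ^ q) = a ^ ((q ^ 2 + q + 1) * 2) := by ring
      _ = 1 := hpow 2

lemma G_necessary {F : Type*} [Field F] (q : ℕ) (hq0 : q ≠ 0) (a : F) (ha : a ≠ 0)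
    (μ ν ρ l₁ l₂ l₃ : F) (hμ : μ ≠ 0) (hρ : ρ ≠ 0)
    (hl₁ : l₁ ≠ 0) (hl₂ : l₂ ≠ 0) (hl₃ : l₃ ≠ 0)
    (hG : ∀ x y z : F,
      Gmap q (1 : F) (x, y, z) =
        (μ * (Gmap q a (l₁ * x, l₂ * y, l₃ * z)).1,
         ν * (Gmap q a (l₁ * x, l₂ * y, l₃ * z)).2.1,
         ρ * (Gmap q a (l₁ * x, l₂ * y, l₃ * z)).2.2)) :
    a ^ (q ^ 2 + q + 1) = 1 := by
  have z1 : (0 : F) ^ q = 0 := zero_pow hq0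
  have z2 : (0 : F) ^ (q + 1) = 0 := zero_pow (Nat.succ_ne_zero q)
  have c1 : μ * l₁ ^ (q + 1) = 1 := by
    have h := congrArg Prod.fst (hG 1 0 0)
    simp only [Gmap, z1, z2, one_pow, mul_one, mul_zero, zero_mul, one_mul, add_zero,
      zero_add] at h
    linear_combination -h
  have c2 : μ * (a * l₁ ^ q * l₃) = 1 := by
    have h := congrArg Prod.fst (hG 1 0 1)
    simp only [Gmap, z1, z2, one_pow, mul_one, mul_zero, zero_mul, one_mul, add_zero,
      zero_add] at h
    linear_combination -h - c1
  have c3 : μ * (l₂ * l₃ ^ q) = 1 := by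
    have h := congrArg Prod.fst (hG 0 1 1)
    simp only [Gmap, z1, z2, one_pow, mul_one, mul_zero, zero_mul, one_mul, add_zero,
      zero_add] at h
    linear_combination -h
  have c8 : ρ * l₃ ^ (q + 1) = 1 := by
    have h := congrArg (fun v : F × F × F => v.2.2) (hG 0 0 1)
    simp only [Gmap, z1, z2, one_pow, mul_one, mul_zero, zero_mul, one_mul, add_zero,
      zero_add] at h
    linear_combination -h
  have c7 : ρ * (a * l₂ ^ q * l₃) = 1 := by
    have h := congrArg (fun v : F × F × F => v.2.2) (hG 0 1 1)
    simp only [Gmap, z1, z2, one_pow, mul_one, mul_zero, zero_mul, one_mul, add_zero,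
      zero_add] at h
    linear_combination -h - c8
  have e1 : l₁ = a * l₃ := by
    have t : μ * (l₁ ^ q * l₁) = μ * (l₁ ^ q * (a * l₃)) := by linear_combination c1 - c2
    exact mul_left_cancel₀ (pow_ne_zero q hl₁) (mul_left_cancel₀ hμ t)
  have e2 : l₃ ^ q = a * l₂ ^ q := by
    have t : ρ * (l₃ * l₃ ^ q) = ρ * (l₃ * (a * l₂ ^ q))  := by linear_combination c8 - c7
    exact mul_left_cancel₀ hl₃ (mul_left_cancel₀ hρ t)
  have e3 : l₂ * l₃ ^ q = l₁ ^ (q + 1) := by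
    have t : μ * (l₂ * l₃ ^ q) = μ * l₁ ^ (q + 1) := by linear_combination c3 - c1
    exact mul_left_cancel₀ hμ t
  have e4 : l₂ = a ^ (q + 1) * l₃ := by
    have t0 : l₂ * (a * l₂ ^ q) = a ^ (q + 1) * (a * l₂ ^ q * l₃) := by
      calc l₂ * (a * l₂ ^ q) = l₂ * l₃ ^ q := by rw [← e2]
        _ = l₁ ^ (q + 1) := e3
        _ = (a * l₃) ^ (q + 1) := by rw [e1]
        _ = a ^ (q + 1) * (l₃ ^ q * l₃) := by ring
        _ = a ^ (q + 1) * (a * l₂ ^ q * l₃) := by rw [e2]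
    have t : a * l₂ ^ q * l₂ = a * l₂ ^ q * (a ^ (q + 1) * l₃) := by linear_combination t0
    exact mul_left_cancel₀ (mul_ne_zero ha (pow_ne_zero q hl₂)) t
  have t : a ^ (q ^ 2 + q + 1) * l₃ ^ q = 1 * l₃ ^ q := by
    calc a ^ (q ^ 2 + q + 1) * l₃ ^ q = a * (a ^ (q + 1) * l₃) ^ q := by ring
      _ = a * l₂ ^ q := by rw [← e4]
      _ = l₃ ^ q := by rw [← e2]
      _ = 1 * l₃ ^ q := (one_mul _).symm
  exact mul_right_cancel₀ (pow_ne_zero q hl₃) t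

lemma H_necessary {F : Type*} [Field F] (q : ℕ) (hq0 : q ≠ 0) (a : F) (ha : a ≠ 0)
    (μ ν ρ l₁ l₂ l₃ : F) (hμ : μ ≠ 0) (hρ : ρ ≠ 0)
    (hl₁ : l₁ ≠ 0) (hl₂ : l₂ ≠ 0) (hl₃ : l₃ ≠ 0)
    (hH : ∀ x y z : F,
      Hmap q (1 : F) (x, y, z) =
        (μ * (Hmap q a (l₁ * x, l₂ * y, l₃ * z)).1,
         ν * (Hmap q a (l₁ * x, l₂ * y, l₃ * z)).2.1,
         ρ * (Hmap q a (l₁ * x, l₂ * y, l₃ * z)).2.2)) :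
    a ^ (q ^ 2 + q + 1) = 1 := by
  have z1 : (0 : F) ^ q = 0 := zero_pow hq0
  have z2 : (0 : F) ^ (q + 1) = 0 := zero_pow (Nat.succ_ne_zero q)
  have d1 : μ * l₁ ^ (q + 1) = 1 := by
    have h := congrArg Prod.fst (hH 1 0 0)
    simp only [Hmap, z1, z2, one_pow, mul_one, mul_zero, zero_mul, one_mul, add_zero,
      zero_add] at h
    linear_combination -h
  have d2 : μ * (a * l₁ * l₂ ^ q) = 1 := by
    have h := congrArg Prod.fst (hH 1 1 0)
    simp only [Hmap, z1, z2, one_pow, mul_one, mul_zero, zero_mul, one_mul, add_zero,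
      zero_add] at h
    linear_combination -h - d1
  have d3 : μ * (l₂ * l₃ ^ q) = 1 := by
    have h := congrArg Prod.fst (hH 0 1 1)
    simp only [Hmap, z1, z2, one_pow, mul_one, mul_zero, zero_mul, one_mul, add_zero,
      zero_add] at h
    linear_combination -h
  have d7 : ρ * l₂ ^ (q + 1) = 1 := by
    have h := congrArg (fun v : F × F × F => v.2.2) (hH 0 1 0)
    simp only [Hmap, z1, z2, one_pow, mul_one, mul_zero, zero_mul, one_mul, add_zero,
      zero_add] at h
    linear_combination -h
  have d8 : ρ * (a * l₂ ^ q * l₃) = 1 := by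
    have h := congrArg (fun v : F × F × F => v.2.2) (hH 0 1 1)
    simp only [Hmap, z1, z2, one_pow, mul_one, mul_zero, zero_mul, one_mul, add_zero,
      zero_add] at h
    linear_combination -h - d7
  have f1 : l₁ ^ q = a * l₂ ^ q := by
    have t : μ * (l₁ * l₁ ^ q) = μ * (l₁ * (a * l₂ ^ q)) := by linear_combination d1 - d2
    exact mul_left_cancel₀ hl₁ (mul_left_cancel₀ hμ t)
  have f2 : l₂ = a * l₃ := by
    have t : ρ * (l₂ ^ q * l₂) = ρ * (l₂ ^ q * (a * l₃)) := by linear_combination d7 - d8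
    exact mul_left_cancel₀ (pow_ne_zero q hl₂) (mul_left_cancel₀ hρ t)
  have f3 : l₂ * l₃ ^ q = l₁ ^ (q + 1) := by
    have t : μ * (l₂ * l₃ ^ q) = μ * l₁ ^ (q + 1) := by linear_combination d3 - d1
    exact mul_left_cancel₀ hμ t
  have f4 : l₂ = a ^ (q + 1) * l₁ := by
    have t0 : l₂ * l₃ ^ q = a ^ (q + 1) * l₁ * l₃ ^ q := by
      calc l₂ * l₃ ^ q = l₁ ^ (q + 1) := f3
        _ = l₁ * l₁ ^ q := by ring
        _ = l₁ * (a * l₂ ^ q) := by rw [← f1]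
        _ = l₁ * (a * (a * l₃) ^ q) := by rw [f2]
        _ = a ^ (q + 1) * l₁ * l₃ ^ q := by ring
    exact mul_right_cancel₀ (pow_ne_zero q hl₃) t0
  have t : a ^ (q ^ 2 + q + 1) * l₁ ^ q = 1 * l₁ ^ q := by
    calc a ^ (q ^ 2 + q + 1) * l₁ ^ q = a * (a ^ (q + 1) * l₁) ^ q := by ring
      _ = a * l₂ ^ q := by rw [← f4]
      _ = l₁ ^ q := by rw [← f1]
      _ = 1 * l₁ ^ q := (one_mul _).symm
  exact mul_right_cancel₀ (pow_ne_zero q hl₁) t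

theorem stmt_18 (m i : ℕ) (hm : 3 ≤ m) (hmodd : Odd m) (hi : 0 < i)
    (hgcd : Nat.gcd i m = 1) (q : ℕ) (hq : q = 2 ^ i)
    (F : Type*) [Field F] [Fintype F] (hF : Fintype.card F = 2 ^ m)
    (a : F) (ha : a ≠ 0) :
    [(∃ μ ν ρ l₁ l₂ l₃ : F, μ ≠ 0 ∧ ν ≠ 0 ∧ ρ ≠ 0 ∧ l₁ ≠ 0 ∧ l₂ ≠ 0 ∧ l₃ ≠ 0 ∧
        ∀ x y z : F,
          Gmap q (1 : F) (x, y, z) =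
            (μ * (Gmap q a (l₁ * x, l₂ * y, l₃ * z)).1,
             ν * (Gmap q a (l₁ * x, l₂ * y, l₃ * z)).2.1,
             ρ * (Gmap q a (l₁ * x, l₂ * y, l₃ * z)).2.2)),
     (∃ μ ν ρ l₁ l₂ l₃ : F, μ ≠ 0 ∧ ν ≠ 0 ∧ ρ ≠ 0 ∧ l₁ ≠ 0 ∧ l₂ ≠ 0 ∧ l₃ ≠ 0 ∧
        ∀ x y z : F,
          Hmap q (1 : F) (x, y, z) =
            (μ * (Hmap q a (l₁ * x, l₂ * y, l₃ * z)).1,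
             ν * (Hmap q a (l₁ * x, l₂ * y, l₃ * z)).2.1,
             ρ * (Hmap q a (l₁ * x, l₂ * y, l₃ * z)).2.2)),
     a ^ (q ^ 2 + q + 1) = 1].TFAE ∧
    {a : F | a ≠ 0 ∧ a ^ (q ^ 2 + q + 1) = 1}.ncard =
      Nat.gcd (q ^ 2 + q + 1) (2 ^ m - 1) := by
  have hq0 : q ≠ 0 := by subst hq; positivity
  constructor
  · tfae_have 1 → 3 := by
      rintro ⟨μ, ν, ρ, l₁, l₂, l₃, hμ, hν, hρ, h1, h2, h3, hfun⟩
      exact G_necessary q hq0 a ha μ ν ρ l₁ l₂ l₃ hμ hρ h1 h2 h3 hfun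
    tfae_have 2 → 3 := by
      rintro ⟨μ, ν, ρ, l₁, l₂, l₃, hμ, hν, hρ, h1, h2, h3, hfun⟩
      exact H_necessary q hq0 a ha μ ν ρ l₁ l₂ l₃ hμ hρ h1 h2 h3 hfun
    tfae_have 3 → 1 := G_sufficient q a ha
    tfae_have 3 → 2 := H_sufficient q a ha
    tfae_finish
  · rw [count_roots_of_unity F (q ^ 2 + q + 1) (by positivity), hF]
end
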